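/- arXiv:2406.03667 — 4 statements merged into one kernel-verified Lean document; each statement's English description precedes it below -/
import Mathlib

section
/- A forbidden bipartitioned pair is bipartite-Rao-minimal if and only if every bipartite realization of it is a minimal forbidden induced subgraph, i.e., is not a hereditary bipartite-unigraph while every proper induced subgraph of it is a hereditary bipartite-unigraph. -/
open SimpleGraph

/-- The degree sequence of a finite simple graph, as a multiset of natural numbers. -/
noncomputable def degSeq {V : Type} [Fintype V] (G : SimpleGraph V) : Multiset ℕ :=
  Finset.univ.val.map fun v => Nat.card (G.neighborSet v)

/-- A graph is a bipartite-unigraph if it is bipartite (2-colorable) and every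
bipartite graph with the same degree sequence is isomorphic to it. -/
def IsBipartiteUnigraph {V : Type} [Fintype V] (G : SimpleGraph V) : Prop :=
  G.Colorable 2 ∧
    ∀ (W : Type) [Fintype W] (H : SimpleGraph W),
      H.Colorable 2 → degSeq H = degSeq G → Nonempty (H ≃g G)

/-- A graph is a hereditary bipartite-unigraph if every induced subgraph of it
is a bipartite-unigraph. -/
def IsHereditaryBipartiteUnigraph {V : Type} [Fintype V] (G : SimpleGraph V) : Prop :=
  ∀ s : Finset V, IsBipartiteUnigraph (G.induce (s : Set V))

/-- `A` determines a bipartition of `G`: every edge of `G` has exactly one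
endpoint in `A` (the other side being `Aᶜ`). -/
def IsBipartitionOf {V : Type} [Fintype V] (G : SimpleGraph V) (A : Finset V) : Prop :=
  ∀ u v : V, G.Adj u v → (u ∈ A ↔ v ∉ A)

/-- The multiset of degrees (in `G`) of the vertices of `A`. -/
noncomputable def degOn {V : Type} [Fintype V] (G : SimpleGraph V) (A : Finset V) : Multiset ℕ :=
  A.val.map fun v => Nat.card (G.neighborSet v)

/-- The bipartite graph `G`, with bipartition `(A, Aᶜ)`, realizes the unordered
bipartitioned pair `{d₁, d₂}`. -/
def RealizesPair {V : Type} [Fintype V] [DecidableEq V] (G : SimpleGraph V) (A : Finset V)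
    (d₁ d₂ : Multiset ℕ) : Prop :=
  IsBipartitionOf G A ∧
    ((degOn G A = d₁ ∧ degOn G Aᶜ = d₂) ∨ (degOn G A = d₂ ∧ degOn G Aᶜ = d₁))

/-- The unordered bipartitioned pair `{d₁, d₂}` bipartite-Rao-contains the
unordered bipartitioned pair `{e₁, e₂}`: some bipartite realization of
`{e₁, e₂}` embeds as an induced subgraph in a bipartite realization of
`{d₁, d₂}`, respecting the sides of the bipartitions. -/
def BRaoContains (d₁ d₂ e₁ e₂ : Multiset ℕ) : Prop :=
  ∃ (n m : ℕ) (G : SimpleGraph (Fin n)) (A : Finset (Fin n))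
    (H : SimpleGraph (Fin m)) (C : Finset (Fin m)) (f : H ↪g G),
    RealizesPair G A d₁ d₂ ∧ RealizesPair H C e₁ e₂ ∧
    ∀ x : Fin m, x ∈ C ↔ f x ∈ A

/-- `{d₁, d₂}` is a bipartitioned pair: it is realized by some bipartite graph. -/
def IsBipartitionedPair (d₁ d₂ : Multiset ℕ) : Prop :=
  ∃ (n : ℕ) (G : SimpleGraph (Fin n)) (A : Finset (Fin n)), RealizesPair G A d₁ d₂

/-- A bipartitioned pair is forbidden if every bipartite graph realizing it
fails to be a hereditary bipartite-unigraph. -/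
def IsForbiddenPair (d₁ d₂ : Multiset ℕ) : Prop :=
  IsBipartitionedPair d₁ d₂ ∧
    ∀ (n : ℕ) (G : SimpleGraph (Fin n)) (A : Finset (Fin n)),
      RealizesPair G A d₁ d₂ → ¬ IsHereditaryBipartiteUnigraph G

/-- A forbidden pair is bipartite-Rao-minimal if it does not
bipartite-Rao-contain any forbidden pair other than itself. -/
def IsBRaoMinimal (d₁ d₂ : Multiset ℕ) : Prop :=
  IsForbiddenPair d₁ d₂ ∧
    ∀ e₁ e₂ : Multiset ℕ, IsForbiddenPair e₁ e₂ → BRaoContains d₁ d₂ e₁ e₂ →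
      (e₁ = d₁ ∧ e₂ = d₂) ∨ (e₁ = d₂ ∧ e₂ = d₁)


lemma colorable_of_iso {α β : Type} {G : SimpleGraph α} {H : SimpleGraph β}
    (e : G ≃g H) (h : H.Colorable 2) : G.Colorable 2 := by
  obtain ⟨c⟩ := h
  exact ⟨c.comp e.toHom⟩

lemma degree_iso {α β : Type} [Fintype α] [Fintype β] {G : SimpleGraph α} {H : SimpleGraph β}
    (e : G ≃g H) (v : α) :
    Nat.card (G.neighborSet v) = Nat.card (H.neighborSet (e v)) :=
  Nat.card_congr (e.mapNeighborSet v)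

lemma degSeq_iso {α β : Type} [Fintype α] [Fintype β] {G : SimpleGraph α} {H : SimpleGraph β}
    (e : G ≃g H) : degSeq G = degSeq H := by
  unfold degSeq
  have : (Finset.univ : Finset β) = Finset.univ.map e.toEquiv.toEmbedding :=
    (Finset.map_univ_equiv _).symm
  rw [this, Finset.map_val, Multiset.map_map]
  exact Multiset.map_congr rfl (fun v _ => degree_iso e v)

lemma unigraph_iso {α β : Type} [Fintype α] [Fintype β] {G : SimpleGraph α} {H : SimpleGraph β}
    (e : G ≃g H) (h : IsBipartiteUnigraph H) : IsBipartiteUnigraph G := by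
  refine ⟨colorable_of_iso e h.1, fun W _ K hK hdeg => ?_⟩
  obtain ⟨i⟩ := h.2 W K hK (hdeg.trans (degSeq_iso e))
  exact ⟨i.trans e.symm⟩

/-- iso between induced subgraphs along a graph iso -/
noncomputable def induceIso {α β : Type} {G : SimpleGraph α} {H : SimpleGraph β}
    (e : G ≃g H) (s : Finset α) [DecidableEq β] :
    G.induce (s : Set α) ≃g H.induce ((s.image e : Finset β) : Set β) where
  toEquiv := Equiv.subtypeEquiv e.toEquiv (by
    intro a
    simp)
  map_rel_iff' := by
    intro a b
    simp only [Equiv.subtypeEquiv, Equiv.coe_fn_mk, comap_adj, Function.Embedding.coe_subtype]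
    exact e.map_rel_iff

lemma hereditary_iso {α β : Type} [Fintype α] [Fintype β] [DecidableEq β]
    {G : SimpleGraph α} {H : SimpleGraph β}
    (e : G ≃g H) (h : IsHereditaryBipartiteUnigraph H) : IsHereditaryBipartiteUnigraph G := by
  intro s
  exact unigraph_iso (induceIso e s) (h (s.image e))

noncomputable def induceUnivIso' {α : Type} (G : SimpleGraph α) [Fintype α] :
    G.induce ((Finset.univ : Finset α) : Set α) ≃g G where
  toEquiv := Equiv.subtypeUnivEquiv (by simp)
  map_rel_iff' := by
    intro a b
    simp only [Equiv.subtypeUnivEquiv, Equiv.coe_fn_mk, comap_adj, Function.Embedding.coe_subtype]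

lemma unigraph_of_hereditary {α : Type} [Fintype α] {G : SimpleGraph α}
    (h : IsHereditaryBipartiteUnigraph G) : IsBipartiteUnigraph G :=
  unigraph_iso (induceUnivIso' G).symm (h Finset.univ)

lemma degSeq_split {α : Type} [Fintype α] [DecidableEq α] (G : SimpleGraph α) (A : Finset α) :
    degSeq G = degOn G A + degOn G Aᶜ := by
  unfold degSeq degOn
  have h1 : (Finset.univ : Finset α) = A.disjUnion Aᶜ disjoint_compl_right := by
    rw [Finset.disjUnion_eq_union, Finset.union_compl]
  rw [h1]
  show ((A.val + Aᶜ.val).map _) = _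
  rw [Multiset.map_add]

lemma colorable_of_bipartition {α : Type} [Fintype α] [DecidableEq α] {G : SimpleGraph α}
    {A : Finset α} (h : IsBipartitionOf G A) : G.Colorable 2 := by
  refine ⟨SimpleGraph.Coloring.mk (fun v => if v ∈ A then 0 else 1) ?_⟩
  intro u v huv
  have := h u v huv
  by_cases hu : u ∈ A <;> by_cases hv : v ∈ A <;> simp_all

lemma realizes_degSeq {V : Type} [Fintype V] [DecidableEq V] {G : SimpleGraph V}
    {A : Finset V} {d₁ d₂ : Multiset ℕ} (h : RealizesPair G A d₁ d₂) :
    degSeq G = d₁ + d₂ := by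
  rcases h.2 with ⟨h1, h2⟩ | ⟨h1, h2⟩
  · rw [degSeq_split G A, h1, h2]
  · rw [degSeq_split G A, h1, h2, add_comm]

lemma realizes_card {V : Type} [Fintype V] [DecidableEq V] {G : SimpleGraph V}
    {A : Finset V} {d₁ d₂ : Multiset ℕ} (h : RealizesPair G A d₁ d₂) :
    Multiset.card d₁ + Multiset.card d₂ = Fintype.card V := by
  have := congrArg Multiset.card (realizes_degSeq h)
  simpa [degSeq, Finset.card_univ] using this.symm

/-- A forbidden bipartitioned pair is bipartite-Rao-minimal iff every bipartite
realization of it is a minimal forbidden induced subgraph for the class of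
hereditary bipartite-unigraphs. -/
theorem bRaoMinimal_iff_realizations_minimal_forbidden
    (d₁ d₂ : Multiset ℕ) (hforb : IsForbiddenPair d₁ d₂) :
    IsBRaoMinimal d₁ d₂ ↔
      ∀ (n : ℕ) (G : SimpleGraph (Fin n)) (A : Finset (Fin n)),
        RealizesPair G A d₁ d₂ →
          ¬ IsHereditaryBipartiteUnigraph G ∧
          ∀ s : Finset (Fin n), s ≠ Finset.univ →
            IsHereditaryBipartiteUnigraph (G.induce (s : Set (Fin n))) := by
  classical
  constructor
  · rintro ⟨-, hmin⟩ n G A hGA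
    refine ⟨hforb.2 n G A hGA, ?_⟩
    intro s hs
    by_contra hnh
    set K := G.induce (s : Set (Fin n)) with hK
    set m := Fintype.card ((s : Set (Fin n)) : Type) with hm
    set e : ((s : Set (Fin n)) : Type) ≃ Fin m := Fintype.equivFin _ with he
    set Hfin : SimpleGraph (Fin m) := K.comap ⇑e.symm with hHfin
    let isoKH : K ≃g Hfin := ⟨e, by intro a b; simp [hHfin, comap_adj]⟩
    set C : Finset (Fin m) := Finset.univ.filter (fun x => ↑(e.symm x) ∈ A) with hC
    have hmemC : ∀ x : Fin m, x ∈ C ↔ ↑(e.symm x) ∈ A := by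
      intro x; simp [hC]
    have hadjH : ∀ u v : Fin m, Hfin.Adj u v ↔ G.Adj ↑(e.symm u) ↑(e.symm v) := by
      intro u v; exact Iff.rfl
    have hbipC : IsBipartitionOf Hfin C := by
      intro u v huv
      rw [hmemC u, hmemC v]
      exact hGA.1 _ _ ((hadjH u v).mp huv)
    have hHC : RealizesPair Hfin C (degOn Hfin C) (degOn Hfin Cᶜ) :=
      ⟨hbipC, Or.inl ⟨rfl, rfl⟩⟩
    have hcont : BRaoContains d₁ d₂ (degOn Hfin C) (degOn Hfin Cᶜ) := by
      refine ⟨n, m, G, A, Hfin, C, (Embedding.induce (s : Set (Fin n))).comp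
        isoKH.symm.toEmbedding, hGA, hHC, ?_⟩
      intro x
      exact hmemC x
    have hcolH : Hfin.Colorable 2 := colorable_of_bipartition hbipC
    have hfe : IsForbiddenPair (degOn Hfin C) (degOn Hfin Cᶜ) := by
      refine ⟨⟨m, Hfin, C, hHC⟩, ?_⟩
      intro n' H' A' hH' hher
      have hdeg : degSeq H' = degSeq Hfin := by
        rw [realizes_degSeq hH', realizes_degSeq hHC]
      by_cases hiso : Nonempty (H' ≃g Hfin)
      · obtain ⟨i⟩ := hiso
        exact hnh (hereditary_iso isoKH (hereditary_iso i.symm hher))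
      · have hu := unigraph_of_hereditary hher
        exact hiso ⟨((hu.2 (Fin m) Hfin hcolH hdeg.symm).some).symm⟩
    have heq := hmin _ _ hfe hcont
    have hcard1 : Multiset.card d₁ + Multiset.card d₂ = n := by
      simpa using realizes_card hGA
    have hcard2 : Multiset.card (degOn Hfin C) + Multiset.card (degOn Hfin Cᶜ) = m := by
      simpa using realizes_card hHC
    have hmn : m = n := by
      rcases heq with ⟨h1, h2⟩ | ⟨h1, h2⟩
      · rw [← hcard1, ← hcard2, h1, h2]
      · rw [← hcard1, ← hcard2, h1, h2, add_comm]
    have hms : m = s.card := by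
      simp [hm]
    have hlt : s.card < n := by
      have : s ⊂ Finset.univ := Finset.ssubset_univ_iff.mpr hs
      simpa using Finset.card_lt_card this
    omega
  · intro hall
    refine ⟨hforb, fun e₁ e₂ hfe hcont => ?_⟩
    obtain ⟨n, m, G, A, H, C, f, hGA, hHC, hside⟩ := hcont
    set t : Finset (Fin n) := Finset.univ.map f.toEmbedding with ht
    by_cases htu : t = Finset.univ
    · have hsurj : Function.Surjective f := by
        intro y
        have hy : y ∈ t := htu ▸ Finset.mem_univ y
        simpa [ht] using hy
      have hbij : Function.Bijective f := ⟨f.injective, hsurj⟩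
      let i : H ≃g G := ⟨Equiv.ofBijective f hbij, f.map_rel_iff⟩
      have hA : A = C.map f.toEmbedding := by
        ext a
        constructor
        · intro ha
          obtain ⟨x, rfl⟩ := hsurj a
          exact Finset.mem_map_of_mem _ ((hside x).mpr ha)
        · intro ha
          obtain ⟨x, hx, rfl⟩ := Finset.mem_map.mp ha
          exact (hside x).mp hx
      have hAc : Aᶜ = Cᶜ.map f.toEmbedding := by
        ext a
        constructor
        · intro ha
          obtain ⟨x, rfl⟩ := hsurj a
          refine Finset.mem_map_of_mem _ ?_
          simp only [Finset.mem_compl] at ha ⊢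
          exact fun hxC => ha ((hside x).mp hxC)
        · intro ha
          obtain ⟨x, hx, rfl⟩ := Finset.mem_map.mp ha
          simp only [Finset.mem_compl] at hx ⊢
          exact fun hfA => hx ((hside x).mpr hfA)
      have hdegf : ∀ x : Fin m, Nat.card (G.neighborSet (f x)) = Nat.card (H.neighborSet x) :=
        fun x => (degree_iso i x).symm
      have h1 : degOn G A = degOn H C := by
        rw [hA]
        unfold degOn
        rw [Finset.map_val, Multiset.map_map]
        exact Multiset.map_congr rfl (fun x _ => hdegf x)
      have h2 : degOn G Aᶜ = degOn H Cᶜ := by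
        rw [hAc]
        unfold degOn
        rw [Finset.map_val, Multiset.map_map]
        exact Multiset.map_congr rfl (fun x _ => hdegf x)
      rcases hGA.2 with ⟨hd1, hd2⟩ | ⟨hd1, hd2⟩ <;>
        rcases hHC.2 with ⟨he1, he2⟩ | ⟨he1, he2⟩
      · exact Or.inl ⟨he1 ▸ h1 ▸ hd1, he2 ▸ h2 ▸ hd2⟩
      · exact Or.inr ⟨he2 ▸ h2 ▸ hd2, he1 ▸ h1 ▸ hd1⟩
      · exact Or.inr ⟨he1 ▸ h1 ▸ hd1, he2 ▸ h2 ▸ hd2⟩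
      · exact Or.inl ⟨he2 ▸ h2 ▸ hd2, he1 ▸ h1 ▸ hd1⟩
    · exfalso
      have hher := (hall n G A hGA).2 t htu
      have hmemt : ∀ x : Fin m, f x ∈ (t : Set (Fin n)) := by
        intro x; simp [ht]
      have hinj : Function.Injective (fun x : Fin m => (⟨f x, hmemt x⟩ : (t : Set (Fin n)))) := by
        intro a b hab
        exact f.injective (congrArg Subtype.val hab)
      have hsurj : Function.Surjective (fun x : Fin m => (⟨f x, hmemt x⟩ : (t : Set (Fin n)))) := by
        rintro ⟨y, hy⟩
        simp only [ht, Finset.coe_map, Finset.coe_univ, Set.image_univ, Set.mem_range] at hy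
        obtain ⟨x, rfl⟩ := hy
        exact ⟨x, rfl⟩
      have j : H ≃g G.induce (t : Set (Fin n)) :=
        ⟨Equiv.ofBijective _ ⟨hinj, hsurj⟩, by
          intro a b
          simp only [Equiv.ofBijective_apply, comap_adj, Function.Embedding.coe_subtype]
          exact f.map_rel_iff⟩
      exact hfe.2 m H C hHC (hereditary_iso j hher)
end

section
/- For all natural numbers a ≥ b ≥ 0, the complete bipartite graph K_{a,b} is a bipartite-unigraph; that is, every bipartite graph whose degree sequence, as a multiset, consists of the value a with multiplicity b and the value b with multiplicity a is isomorphic to K_{a,b}. -/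
open SimpleGraph

/-- For `a ≥ b`, the complete bipartite graph `K_{a,b}` is a bipartite-unigraph:
every bipartite graph whose degree sequence is the multiset with value `a`
of multiplicity `b` and value `b` of multiplicity `a` is isomorphic to `K_{a,b}`. -/
theorem completeBipartiteGraph_isBipartiteUnigraph (a b : ℕ) (hab : b ≤ a)
    {W : Type} [Fintype W] (H : SimpleGraph W) (hbip : H.Colorable 2)
    (hdeg : degSeq H = Multiset.replicate b a + Multiset.replicate a b) :
    Nonempty (H ≃g completeBipartiteGraph (Fin a) (Fin b)) := by
  classical
  obtain ⟨c⟩ := hbip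
  have hds : degSeq H = Finset.univ.val.map (fun v => H.degree v) := by
    unfold degSeq
    congr 1
    funext v
    rw [Nat.card_eq_fintype_card, SimpleGraph.card_neighborSet_eq_degree]
  have hcard : Fintype.card W = b + a := by
    have := congrArg Multiset.card hdeg
    simpa [degSeq] using this
  -- every degree is a or b
  have hmemdeg : ∀ v : W, H.degree v = a ∨ H.degree v = b := by
    intro v
    have hv : H.degree v ∈ degSeq H := by
      rw [hds]
      exact Multiset.mem_map_of_mem _ (Finset.mem_univ_val v)
    rw [hdeg] at hv
    rcases Multiset.mem_add.1 hv with h | h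
    · exact Or.inl (Multiset.eq_of_mem_replicate h)
    · exact Or.inr (Multiset.eq_of_mem_replicate h)
  rcases Nat.eq_zero_or_pos b with hb0 | hbpos
  · -- b = 0 : empty graph
    subst hb0
    have hdeg0 : ∀ v : W, H.degree v = 0 := by
      intro v
      have hv : H.degree v ∈ degSeq H := by
        rw [hds]
        exact Multiset.mem_map_of_mem _ (Finset.mem_univ_val v)
      rw [hdeg] at hv
      simpa using Multiset.eq_of_mem_replicate (by simpa using hv)
    have hnoadj : ∀ u v : W, ¬ H.Adj u v := by
      intro u v huv
      have : v ∈ H.neighborFinset u := by simpa [SimpleGraph.mem_neighborFinset] using huv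
      have := Finset.card_pos.2 ⟨v, this⟩
      rw [SimpleGraph.card_neighborFinset_eq_degree, hdeg0] at this
      omega
    have e : W ≃ Fin a ⊕ Fin 0 := Fintype.equivOfCardEq (by simp [hcard])
    have hnoR : ∀ x : Fin a ⊕ Fin 0, x.isRight = false := by
      rintro (x | x)
      · simp
      · exact x.elim0
    refine ⟨⟨e, ?_⟩⟩
    intro u v
    simp only [completeBipartiteGraph_adj]
    constructor
    · rintro (⟨-, h⟩ | ⟨h, -⟩)
      · rw [hnoR] at h; exact absurd h (by simp)
      · rw [hnoR] at h; exact absurd h (by simp)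
    · intro h; exact absurd h (hnoadj u v)
  · -- b ≥ 1
    set X : Finset W := Finset.univ.filter (fun v => c v = 0) with hXdef
    set Y : Finset W := Finset.univ.filter (fun v => ¬ c v = 0) with hYdef
    have hmemX : ∀ v, v ∈ X ↔ c v = 0 := by intro v; simp [hXdef]
    have hmemY : ∀ v, v ∈ Y ↔ ¬ c v = 0 := by intro v; simp [hYdef]
    have hcol : ∀ {i j : Fin 2}, i ≠ j → (i = 0 ↔ ¬ j = 0) := by decide
    have hadjXY : ∀ u v, H.Adj u v → (u ∈ X ↔ v ∈ Y) := by
      intro u v huv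
      rw [hmemX, hmemY]
      exact hcol (c.valid huv)
    have hNX : ∀ v ∈ X, H.neighborFinset v ⊆ Y := by
      intro v hv u hu
      rw [SimpleGraph.mem_neighborFinset] at hu
      exact (hadjXY v u hu).1 hv
    have hcol2 : ∀ {i j : Fin 2}, i ≠ j → ¬ i = 0 → j = 0 := by decide
    have hNY : ∀ v ∈ Y, H.neighborFinset v ⊆ X := by
      intro v hv u hu
      rw [SimpleGraph.mem_neighborFinset] at hu
      rw [hmemY] at hv
      rw [hmemX]
      exact hcol2 (c.valid hu) hv
    -- degree bounds
    have hdegleX : ∀ v ∈ X, H.degree v ≤ Y.card := by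
      intro v hv
      rw [← SimpleGraph.card_neighborFinset_eq_degree]
      exact Finset.card_le_card (hNX v hv)
    have hdegleY : ∀ v ∈ Y, H.degree v ≤ X.card := by
      intro v hv
      rw [← SimpleGraph.card_neighborFinset_eq_degree]
      exact Finset.card_le_card (hNY v hv)
    have hdeggeb : ∀ v : W, b ≤ H.degree v := by
      intro v
      rcases hmemdeg v with h | h <;> omega
    -- partition cardinality
    have hXYcard : X.card + Y.card = b + a := by
      rw [← hcard, hXdef, hYdef]
      exact Finset.card_filter_add_card_filter_not _
    -- total degree sum
    have htotal : ∑ v : W, H.degree v = b * a + a * b := by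
      have h1 : (degSeq H).sum = ∑ v : W, H.degree v := by
        rw [hds]
        rfl
      rw [← h1, hdeg]
      simp [Multiset.sum_replicate, smul_eq_mul]
    -- degree as a sum over the other side
    have hdegX : ∀ v ∈ X, H.degree v = ∑ u ∈ Y, if H.Adj v u then 1 else 0 := by
      intro v hv
      rw [← SimpleGraph.card_neighborFinset_eq_degree, ← Finset.card_filter]
      congr 1
      ext u
      simp only [Finset.mem_filter, SimpleGraph.mem_neighborFinset]
      constructor
      · intro hu
        exact ⟨hNX v hv (by rwa [SimpleGraph.mem_neighborFinset]), hu⟩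
      · exact fun h => h.2
    have hdegY : ∀ u ∈ Y, H.degree u = ∑ v ∈ X, if H.Adj v u then 1 else 0 := by
      intro u hu
      rw [← SimpleGraph.card_neighborFinset_eq_degree, ← Finset.card_filter]
      congr 1
      ext v
      simp only [Finset.mem_filter, SimpleGraph.mem_neighborFinset]
      constructor
      · intro hv
        exact ⟨hNY u hu (by rwa [SimpleGraph.mem_neighborFinset]), hv.symm⟩
      · exact fun h => h.2.symm
    have hsumeq : ∑ v ∈ X, H.degree v = ∑ u ∈ Y, H.degree u := by
      rw [Finset.sum_congr rfl hdegX, Finset.sum_congr rfl hdegY]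
      exact Finset.sum_comm
    have hsplit : ∑ v ∈ X, H.degree v + ∑ u ∈ Y, H.degree u = b * a + a * b := by
      rw [← htotal, hXdef, hYdef]
      exact Finset.sum_filter_add_sum_filter_not _ _ _
    rw [Nat.mul_comm b a] at hsplit
    have hsumX : ∑ v ∈ X, H.degree v = a * b := by omega
    have hsumY : ∑ u ∈ Y, H.degree u = a * b := by omega
    -- X.card ≤ a and Y.card ≤ a
    have hXb : X.card * b ≤ a * b := by
      rw [← hsumX]
      calc X.card * b = ∑ _v ∈ X, b := by rw [Finset.sum_const, smul_eq_mul]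
        _ ≤ ∑ v ∈ X, H.degree v := Finset.sum_le_sum fun v _ => hdeggeb v
    have hYb : Y.card * b ≤ a * b := by
      rw [← hsumY]
      calc Y.card * b = ∑ _v ∈ Y, b := by rw [Finset.sum_const, smul_eq_mul]
        _ ≤ ∑ v ∈ Y, H.degree v := Finset.sum_le_sum fun v _ => hdeggeb v
    have hXlea : X.card ≤ a := Nat.le_of_mul_le_mul_right (by simpa [Nat.mul_comm] using hXb) hbpos
    have hYlea : Y.card ≤ a := Nat.le_of_mul_le_mul_right (by simpa [Nat.mul_comm] using hYb) hbpos
    -- there is a vertex of degree a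
    have hva : ∃ v : W, H.degree v = a := by
      have ha : (a : ℕ) ∈ degSeq H := by
        rw [hdeg]
        exact Multiset.mem_add.2 (Or.inl (Multiset.mem_replicate.2 ⟨by omega, rfl⟩))
      rw [hds] at ha
      obtain ⟨v, -, hv⟩ := Multiset.mem_map.1 ha
      exact ⟨v, hv⟩
    obtain ⟨v0, hv0⟩ := hva
    -- key symmetric lemma
    have key : ∀ P Q : Finset W,
        (∀ v ∈ P, H.degree v ≤ Q.card) → (∀ v ∈ Q, H.degree v ≤ P.card) →
        (∑ v ∈ P, H.degree v = a * b) →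
        P.card + Q.card = b + a → P.card ≤ a → (∃ v ∈ Q, H.degree v = a) →
        (∀ v ∈ P, H.neighborFinset v ⊆ Q) →
        P.card = a ∧ Q.card = b ∧ ∀ u ∈ P, H.neighborFinset u = Q := by
      intro P Q hPQ hQP hsum hsumcard hPle ⟨w0, hw0Q, hw0a⟩ hNPQ
      have hPa : P.card = a := le_antisymm hPle (hw0a ▸ hQP w0 hw0Q)
      have hQb : Q.card = b := by omega
      refine ⟨hPa, hQb, ?_⟩
      have hdegall : ∀ u ∈ P, H.degree u = b := by
        by_contra hcon
        push_neg at hcon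
        obtain ⟨u0, hu0P, hu0⟩ := hcon
        have hlt : ∑ v ∈ P, H.degree v < ∑ _v ∈ P, b := by
          refine Finset.sum_lt_sum (fun v hv => ?_) ⟨u0, hu0P, ?_⟩
          · rw [← hQb]; exact hPQ v hv
          · have := hPQ u0 hu0P; rw [hQb] at this; omega
        rw [Finset.sum_const, smul_eq_mul, hsum, hPa] at hlt
        omega
      intro u huP
      apply Finset.eq_of_subset_of_card_le (hNPQ u huP)
      rw [SimpleGraph.card_neighborFinset_eq_degree, hdegall u huP, hQb]
    -- apply key according to where v0 lies
    have hmain : ∃ P Q : Finset W, (∀ w, w ∈ P ↔ w ∉ Q) ∧ P.card = a ∧ Q.card = b ∧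
        (∀ u ∈ P, H.neighborFinset u = Q) ∧ (∀ u ∈ Q, H.neighborFinset u ⊆ P) := by
      by_cases hv0X : v0 ∈ X
      · refine ⟨Y, X, ?_, ?_⟩
        · intro w; rw [hmemY, hmemX]
        · have := key Y X hdegleY hdegleX hsumY (by omega) hYlea ⟨v0, hv0X, hv0⟩ hNY
          exact ⟨this.1, this.2.1, this.2.2, hNX⟩
      · have hv0Y : v0 ∈ Y := by rw [hmemY]; rw [hmemX] at hv0X; exact hv0X
        refine ⟨X, Y, ?_, ?_⟩
        · intro w; rw [hmemY, hmemX]; tauto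
        · have := key X Y hdegleX hdegleY hsumX (by omega) hXlea ⟨v0, hv0Y, hv0⟩ hNX
          exact ⟨this.1, this.2.1, this.2.2, hNY⟩
    obtain ⟨P, Q, hPQmem, hPa, hQb, hcomp, hQsub⟩ := hmain
    -- adjacency characterization
    have hadj : ∀ u v : W, H.Adj u v ↔ ((u ∈ P ∧ v ∉ P) ∨ (u ∉ P ∧ v ∈ P)) := by
      intro u v
      constructor
      · intro huv
        by_cases huP : u ∈ P
        · left
          refine ⟨huP, ?_⟩
          have : v ∈ Q := by
            rw [← hcomp u huP, SimpleGraph.mem_neighborFinset]; exact huv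
          exact fun hvP => ((hPQmem v).1 hvP) this
        · right
          refine ⟨huP, ?_⟩
          have huQ : u ∈ Q := by
            by_contra h
            exact huP ((hPQmem u).2 h)
          exact hQsub u huQ (by rw [SimpleGraph.mem_neighborFinset]; exact huv)
      · rintro (⟨huP, hvP⟩ | ⟨huP, hvP⟩)
        · have hvQ : v ∈ Q := by by_contra h; exact hvP ((hPQmem v).2 h)
          rw [← SimpleGraph.mem_neighborFinset, hcomp u huP]
          exact hvQ
        · have huQ : u ∈ Q := by by_contra h; exact huP ((hPQmem u).2 h)
          exact ((by rw [← SimpleGraph.mem_neighborFinset, hcomp v hvP]; exact huQ : H.Adj v u)).symm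
    -- build the isomorphism
    have ePcard : Fintype.card {x // x ∈ P} = a := by simp [hPa]
    have eQcard : Fintype.card {x // ¬ x ∈ P} = b := by
      have : ∀ x : W, ¬ x ∈ P ↔ x ∈ Q := by
        intro x
        constructor
        · intro h; by_contra hq; exact h ((hPQmem x).2 hq)
        · intro h hp; exact (hPQmem x).1 hp h
      rw [Fintype.card_congr (Equiv.subtypeEquivRight this)]
      simp [hQb]
    let eP : {x // x ∈ P} ≃ Fin a := Fintype.equivFinOfCardEq ePcard
    let eQ : {x // ¬ x ∈ P} ≃ Fin b := Fintype.equivFinOfCardEq eQcard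
    let e : W ≃ Fin a ⊕ Fin b :=
      (Equiv.sumCompl (· ∈ P)).symm.trans (Equiv.sumCongr eP eQ)
    have heL : ∀ u : W, (e u).isLeft = true ↔ u ∈ P := by
      intro u
      by_cases h : u ∈ P
      · simp [e, Equiv.sumCompl_symm_apply_of_pos h, h]
      · simp [e, Equiv.sumCompl_symm_apply_of_neg h, h]
    have heR : ∀ u : W, (e u).isRight = true ↔ u ∉ P := by
      intro u
      rw [← Sum.not_isLeft, not_iff_not.symm]
      simp [heL]
    refine ⟨⟨e, ?_⟩⟩
    intro u v
    rw [completeBipartiteGraph_adj, hadj u v, heL, heL, heR, heR]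
end

section
/- Let G be a split graph. Then G is a hereditary chordal-unigraph if and only if G is a hereditary unigraph. -/
open SimpleGraph

/-- A graph is a unigraph if every graph with the same degree sequence is
isomorphic to it. -/
def IsUnigraph {V : Type} [Fintype V] (G : SimpleGraph V) : Prop :=
  ∀ (W : Type) [Fintype W] (H : SimpleGraph W), degSeq H = degSeq G → Nonempty (H ≃g G)

/-- A graph is a hereditary unigraph if every induced subgraph of it is a unigraph. -/
def IsHereditaryUnigraph {V : Type} [Fintype V] (G : SimpleGraph V) : Prop :=
  ∀ s : Finset V, IsUnigraph (G.induce (s : Set V))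

/-- A graph is a split graph if its vertex set can be partitioned into a clique
and an independent set. -/
def IsSplit {V : Type} (G : SimpleGraph V) : Prop :=
  ∃ K : Set V, G.IsClique K ∧ Gᶜ.IsClique Kᶜ

/-- A graph is chordal if it has no induced cycle of length at least `4`. -/
def IsChordal {V : Type} (G : SimpleGraph V) : Prop :=
  ∀ n : ℕ, 4 ≤ n → IsEmpty (SimpleGraph.cycleGraph n ↪g G)

/-- A graph is a chordal-unigraph if it is chordal and every chordal graph with
the same degree sequence is isomorphic to it. -/
def IsChordalUnigraph {V : Type} [Fintype V] (G : SimpleGraph V) : Prop :=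
  IsChordal G ∧
    ∀ (W : Type) [Fintype W] (H : SimpleGraph W),
      IsChordal H → degSeq H = degSeq G → Nonempty (H ≃g G)

/-- A graph is a hereditary chordal-unigraph if every induced subgraph of it is
a chordal-unigraph. -/
def IsHereditaryChordalUnigraph {V : Type} [Fintype V] (G : SimpleGraph V) : Prop :=
  ∀ s : Finset V, IsChordalUnigraph (G.induce (s : Set V))



lemma msum_le_of_pairwise : ∀ (P Q : Multiset ℕ), Multiset.card P = Multiset.card Q →
    (∀ p ∈ P, ∀ q ∈ Q, p ≤ q) → P.sum ≤ Q.sum := by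
  intro P
  induction P using Multiset.induction with
  | empty => intro Q _ _; simp
  | cons a P ih =>
    intro Q hcard h
    have hQ : Q ≠ 0 := by
      intro h0; subst h0; simp at hcard
    obtain ⟨b, hb⟩ := Multiset.exists_mem_of_ne_zero hQ
    rw [← Multiset.cons_erase hb, Multiset.sum_cons, Multiset.sum_cons]
    have hcard' : Multiset.card P = Multiset.card (Q.erase b) := by
      rw [Multiset.card_cons] at hcard
      rw [Multiset.card_erase_of_mem hb, Nat.pred_eq_sub_one]
      omega
    exact Nat.add_le_add (h a (Multiset.mem_cons_self a P) b hb)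
      (ih (Q.erase b) hcard' (fun p hp q hq => h p (Multiset.mem_cons_of_mem hp) q (Multiset.mem_of_mem_erase hq)))

lemma top_sum {D S1 S2 : Multiset ℕ} (h1 : S1 ≤ D) (h2 : S2 ≤ D)
    (hcard : Multiset.card S1 = Multiset.card S2)
    (htop : ∀ x ∈ S1, ∀ y ∈ D - S1, y ≤ x) : S2.sum ≤ S1.sum := by
  have e2 : S2 - S1 + S2 ∩ S1 = S2 := Multiset.sub_add_inter _ _
  have e1 : S1 - S2 + S1 ∩ S2 = S1 := Multiset.sub_add_inter _ _
  have hint : S2 ∩ S1 = S1 ∩ S2 := Multiset.inter_comm _ _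
  have hc : Multiset.card (S2 - S1) = Multiset.card (S1 - S2) := by
    have c2 := congrArg Multiset.card e2
    have c1 := congrArg Multiset.card e1
    rw [Multiset.card_add] at c1 c2
    rw [hint] at c2
    omega
  have key : (S2 - S1).sum ≤ (S1 - S2).sum := by
    apply msum_le_of_pairwise _ _ hc
    intro p hp q hq
    have hpD : p ∈ D - S1 := Multiset.mem_of_le (tsub_le_tsub_right h2 S1) hp
    have hqS : q ∈ S1 := Multiset.mem_of_le (tsub_le_self) hq
    exact htop q hqS p hpD
  calc S2.sum = (S2 - S1).sum + (S2 ∩ S1).sum := by rw [← Multiset.sum_add, e2]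
    _ ≤ (S1 - S2).sum + (S1 ∩ S2).sum := by rw [hint]; exact Nat.add_le_add_right key _
    _ = S1.sum := by rw [← Multiset.sum_add, e1]

lemma exists_top {W : Type} [Fintype W] (f : W → ℕ) :
    ∀ k, k ≤ Fintype.card W →
    ∃ A : Finset W, A.card = k ∧ ∀ a ∈ A, ∀ b, b ∉ A → f b ≤ f a := by
  classical
  intro k
  induction k with
  | zero => exact fun _ => ⟨∅, rfl, by simp⟩
  | succ k ih =>
    intro hk
    obtain ⟨A, hcard, htop⟩ := ih (by omega)
    have hne : Aᶜ.Nonempty := by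
      rw [← Finset.card_pos, Finset.card_compl, hcard]
      omega
    obtain ⟨b0, hb0, hmax⟩ := Finset.exists_max_image Aᶜ f hne
    have hb0' : b0 ∉ A := Finset.mem_compl.mp hb0
    refine ⟨insert b0 A, ?_, ?_⟩
    · rw [Finset.card_insert_of_notMem hb0', hcard]
    · intro a ha b hb
      have hbA : b ∉ A := fun h => hb (Finset.mem_insert_of_mem h)
      rcases Finset.mem_insert.mp ha with rfl | ha
      · exact hmax b (Finset.mem_compl.mpr hbA)
      · exact htop a ha b hbA

section
variable {m : ℕ}
open Fin.CommRing

lemma finv (k : ℕ) (hk : k < m+2+2) : ((k : ℕ) : Fin (m+2+2)).val = k := Fin.val_cast_of_lt hk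

lemma fin_ne_add_two (i : Fin (m+2+2)) : i + 2 ≠ i := by
  intro h
  have h2 : ((2:ℕ) : Fin (m+2+2)) = 0 := by push_cast; linear_combination h
  have hv := congrArg Fin.val h2
  rw [finv 2 (by omega)] at hv
  simp at hv
lemma fin_not_adj_two (i : Fin (m+2+2)) : ¬ (cycleGraph (m+2+2)).Adj i (i+2) := by
  rw [cycleGraph_adj]
  rintro (h | h)
  · have h3 : ((3:ℕ) : Fin (m+2+2)) = 0 := by push_cast; linear_combination -h
    have hv := congrArg Fin.val h3
    rw [finv 3 (by omega)] at hv
    simp at hv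
  · have h1 : ((1:ℕ) : Fin (m+2+2)) = ((2:ℕ) : Fin (m+2+2)) := by
      push_cast; linear_combination -h
    have hv := congrArg Fin.val h1
    rw [finv 1 (by omega), finv 2 (by omega)] at hv
    exact absurd hv (by omega)
lemma fin_adj_one (i : Fin (m+2+2)) : (cycleGraph (m+2+2)).Adj i (i+1) := by
  rw [cycleGraph_adj]; right; exact add_sub_cancel_left i 1
end

lemma degSeq_eq {W : Type} [Fintype W] (H : SimpleGraph W) [DecidableRel H.Adj] :
    degSeq H = Finset.univ.val.map (fun v => (Finset.univ.filter (H.Adj v)).card) := by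
  classical
  apply Multiset.map_congr rfl
  intro v _
  have h : H.neighborSet v = ↑(Finset.univ.filter (H.Adj v)) := by
    ext w; simp [SimpleGraph.mem_neighborSet]
  rw [h, Nat.card_coe_set_eq, Set.ncard_coe_finset]

lemma doublecount {W : Type} [Fintype W] [DecidableEq W] (H : SimpleGraph W) [DecidableRel H.Adj]
    (s t : Finset W) :
    ∑ v ∈ s, ((Finset.univ.filter (H.Adj v)) ∩ t).card
      = ∑ u ∈ t, ((Finset.univ.filter (H.Adj u)) ∩ s).card := by
  have key : ∀ (s t : Finset W) (v : W),
      ((Finset.univ.filter (H.Adj v)) ∩ t).card = ∑ u ∈ t, if H.Adj v u then 1 else 0 := by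
    intro s t v
    have h : (Finset.univ.filter (H.Adj v)) ∩ t = t.filter (fun u => H.Adj v u) := by
      ext u; simp [Finset.mem_filter, Finset.mem_inter, and_comm]
    rw [h, Finset.card_filter]
  simp_rw [key s t, key t s]
  rw [Finset.sum_comm]
  apply Finset.sum_congr rfl
  intro u _
  apply Finset.sum_congr rfl
  intro v _
  simp [SimpleGraph.adj_comm]

open Finset in
lemma forcing {W : Type} [Fintype W] [DecidableEq W] (H : SimpleGraph W) [DecidableRel H.Adj]
    (A : Finset W) (e : ℕ)
    (h1 : A.card * (A.card - 1) + e ≤ ∑ v ∈ A, (Finset.univ.filter (H.Adj v)).card)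
    (h2 : ∑ u ∈ Aᶜ, (Finset.univ.filter (H.Adj u)).card ≤ e) :
    IsSplit H := by
  set m := A.card * (A.card - 1) with hm
  have hdec : ∀ (B : Finset W) (v : W), (Finset.univ.filter (H.Adj v)).card
      = ((Finset.univ.filter (H.Adj v)) ∩ B).card + ((Finset.univ.filter (H.Adj v)) \ B).card :=
    fun B v => (Finset.card_inter_add_card_sdiff _ _).symm
  have hsub : ∀ v ∈ A, (Finset.univ.filter (H.Adj v)) ∩ A ⊆ A.erase v := by
    intro v hv u hu
    simp only [Finset.mem_inter, Finset.mem_filter] at hu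
    exact Finset.mem_erase.mpr ⟨fun h => H.irrefl (h ▸ hu.1.2), hu.2⟩
  have hbound : ∀ v ∈ A, ((Finset.univ.filter (H.Adj v)) ∩ A).card ≤ A.card - 1 := by
    intro v hv
    have := Finset.card_le_card (hsub v hv)
    rwa [Finset.card_erase_of_mem hv] at this
  have hP : (∑ v ∈ A, ((Finset.univ.filter (H.Adj v)) ∩ A).card) ≤ m := by
    calc (∑ v ∈ A, ((Finset.univ.filter (H.Adj v)) ∩ A).card)
        ≤ ∑ _v ∈ A, (A.card - 1) := Finset.sum_le_sum hbound
      _ = m := by rw [Finset.sum_const, smul_eq_mul]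
  have hsd : ∀ (v : W), (Finset.univ.filter (H.Adj v)) \ A = (Finset.univ.filter (H.Adj v)) ∩ Aᶜ :=
    fun v => Finset.sdiff_eq_inter_compl _ _
  have hcc : (∑ v ∈ A, ((Finset.univ.filter (H.Adj v)) \ A).card)
      = ∑ u ∈ Aᶜ, ((Finset.univ.filter (H.Adj u)) ∩ A).card := by
    simp_rw [hsd]
    exact doublecount H A Aᶜ
  have hSA : (∑ v ∈ A, (Finset.univ.filter (H.Adj v)).card)
      = (∑ v ∈ A, ((Finset.univ.filter (H.Adj v)) ∩ A).card)
        + (∑ v ∈ A, ((Finset.univ.filter (H.Adj v)) \ A).card) := by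
    rw [← Finset.sum_add_distrib]
    exact Finset.sum_congr rfl fun v _ => hdec A v
  have hSB : (∑ u ∈ Aᶜ, (Finset.univ.filter (H.Adj u)).card)
      = (∑ u ∈ Aᶜ, ((Finset.univ.filter (H.Adj u)) ∩ A).card)
        + (∑ u ∈ Aᶜ, ((Finset.univ.filter (H.Adj u)) \ A).card) := by
    rw [← Finset.sum_add_distrib]
    refine Finset.sum_congr rfl fun u _ => ?_
    rw [hdec A u]
  set P := (∑ v ∈ A, ((Finset.univ.filter (H.Adj v)) ∩ A).card) with hPdef
  set c := (∑ v ∈ A, ((Finset.univ.filter (H.Adj v)) \ A).card) with hcdef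
  set Q := (∑ u ∈ Aᶜ, ((Finset.univ.filter (H.Adj u)) \ A).card) with hQdef
  rw [hSA] at h1
  rw [hSB, ← hcc] at h2
  have hPm : P = m := by omega
  have hQ0 : Q = 0 := by omega
  have hclq : H.IsClique (↑A : Set W) := by
    have heach : ∀ v ∈ A, ((Finset.univ.filter (H.Adj v)) ∩ A).card = A.card - 1 := by
      have := (Finset.sum_eq_sum_iff_of_le hbound).mp
        (by rw [← hPdef, hPm, hm, Finset.sum_const, smul_eq_mul])
      exact this
    intro x hx y hy hxy
    have hx' : x ∈ A := hx
    have hy' : y ∈ A := hy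
    have hEq : (Finset.univ.filter (H.Adj x)) ∩ A = A.erase x := by
      apply Finset.eq_of_subset_of_card_le (hsub x hx')
      rw [heach x hx', Finset.card_erase_of_mem hx']
    have hmem : y ∈ (Finset.univ.filter (H.Adj x)) ∩ A := by
      rw [hEq]; exact Finset.mem_erase.mpr ⟨Ne.symm hxy, hy'⟩
    simp only [Finset.mem_inter, Finset.mem_filter] at hmem
    exact hmem.1.2
  have hindep : Hᶜ.IsClique ((↑A : Set W)ᶜ) := by
    intro x hx y hy hxy
    refine ⟨hxy, fun hadj => ?_⟩
    have hx' : x ∈ Aᶜ := by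
      simp only [Set.mem_compl_iff, Finset.mem_coe] at hx
      exact Finset.mem_compl.mpr hx
    have hy' : y ∉ A := by
      simp only [Set.mem_compl_iff, Finset.mem_coe] at hy
      exact hy
    have hzero : ((Finset.univ.filter (H.Adj x)) \ A).card = 0 :=
      Finset.sum_eq_zero_iff.mp hQ0 x hx'
    have hmem : y ∈ (Finset.univ.filter (H.Adj x)) \ A := by
      simp only [Finset.mem_sdiff, Finset.mem_filter, Finset.mem_univ, true_and]
      exact ⟨hadj, hy'⟩
    rw [Finset.card_eq_zero.mp hzero] at hmem
    exact absurd hmem (Finset.notMem_empty y)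
  exact ⟨↑A, hclq, hindep⟩

open Finset in
lemma isSplit_of_degSeq_eq {V W : Type} [Fintype V] [Fintype W] {G : SimpleGraph V}
    {H : SimpleGraph W} (hG : IsSplit G) (hdeg : degSeq H = degSeq G) : IsSplit H := by
  classical
  obtain ⟨Ks, hKclq, hKind⟩ := hG
  set K : Finset V := Ks.toFinset with hKdef
  have hKs : ∀ v, v ∈ K ↔ v ∈ Ks := fun v => Set.mem_toFinset
  have hdG : degSeq G = Finset.univ.val.map (fun v => (Finset.univ.filter (G.Adj v)).card) :=
    degSeq_eq G
  have hdH : degSeq H = Finset.univ.val.map (fun w => (Finset.univ.filter (H.Adj w)).card) :=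
    degSeq_eq H
  have hcardVW : Fintype.card W = Fintype.card V := by
    have h1 := congrArg Multiset.card hdeg
    rw [hdG, hdH, Multiset.card_map, Multiset.card_map] at h1
    simpa [Finset.card_univ] using h1
  have hcard : K.card ≤ Fintype.card W := by
    rw [hcardVW]; exact Finset.card_le_univ K
  obtain ⟨A, hAcard, hAtop⟩ :=
    exists_top (fun w => (Finset.univ.filter (H.Adj w)).card) K.card hcard
  -- G side computations
  have hNK : ∀ v ∈ K, (Finset.univ.filter (G.Adj v)) ∩ K = K.erase v := by
    intro v hv
    ext u
    simp only [Finset.mem_inter, Finset.mem_filter, Finset.mem_univ, true_and, Finset.mem_erase]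
    constructor
    · rintro ⟨hadj, hu⟩
      exact ⟨fun h => G.irrefl (h ▸ hadj), hu⟩
    · rintro ⟨hne, hu⟩
      exact ⟨hKclq ((hKs v).mp hv) ((hKs u).mp hu) (Ne.symm hne), hu⟩
  have hIe : ∀ u, u ∉ K → (Finset.univ.filter (G.Adj u)) \ K = ∅ := by
    intro u hu
    rw [Finset.eq_empty_iff_forall_notMem]
    intro w hw
    simp only [Finset.mem_sdiff, Finset.mem_filter, Finset.mem_univ, true_and] at hw
    obtain ⟨hadj, hwK⟩ := hw
    have h1 : u ∈ Ksᶜ := by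
      intro hc
      exact hu ((hKs u).mpr hc)
    have h2 : w ∈ Ksᶜ := by
      intro hc
      exact hwK ((hKs w).mpr hc)
    exact (hKind h1 h2 hadj.ne).2 hadj
  set e := ∑ v ∈ K, ((Finset.univ.filter (G.Adj v)) \ K).card with hedef
  have hSK : (∑ v ∈ K, (Finset.univ.filter (G.Adj v)).card) = K.card * (K.card - 1) + e := by
    have hstep : ∀ v ∈ K, (Finset.univ.filter (G.Adj v)).card
        = (K.card - 1) + ((Finset.univ.filter (G.Adj v)) \ K).card := by
      intro v hv
      rw [← Finset.card_inter_add_card_sdiff (Finset.univ.filter (G.Adj v)) K, hNK v hv,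
        Finset.card_erase_of_mem hv]
    rw [Finset.sum_congr rfl hstep, Finset.sum_add_distrib, Finset.sum_const, smul_eq_mul]
  have hSI : (∑ u ∈ Kᶜ, (Finset.univ.filter (G.Adj u)).card) = e := by
    have h0 : ∀ u ∈ Kᶜ, (Finset.univ.filter (G.Adj u)).card
        = ((Finset.univ.filter (G.Adj u)) ∩ K).card := by
      intro u hu
      rw [← Finset.card_inter_add_card_sdiff (Finset.univ.filter (G.Adj u)) K,
        hIe u (Finset.mem_compl.mp hu)]
      simp
    calc (∑ u ∈ Kᶜ, (Finset.univ.filter (G.Adj u)).card)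
        = ∑ u ∈ Kᶜ, ((Finset.univ.filter (G.Adj u)) ∩ K).card := Finset.sum_congr rfl h0
      _ = ∑ v ∈ K, ((Finset.univ.filter (G.Adj v)) ∩ Kᶜ).card := doublecount G Kᶜ K
      _ = e := by
          rw [hedef]
          exact Finset.sum_congr rfl fun v _ => by rw [Finset.sdiff_eq_inter_compl]
  -- top sum comparison
  have hAval : A.val ≤ Finset.univ.val := by
    apply Finset.val_le_iff.mpr
    exact Finset.subset_univ A
  have hKval : K.val ≤ Finset.univ.val := by
    apply Finset.val_le_iff.mpr
    exact Finset.subset_univ K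
  have hSAK : (∑ v ∈ K, (Finset.univ.filter (G.Adj v)).card)
      ≤ ∑ v ∈ A, (Finset.univ.filter (H.Adj v)).card := by
    have hsum1 : (∑ v ∈ A, (Finset.univ.filter (H.Adj v)).card)
        = (A.val.map (fun w => (Finset.univ.filter (H.Adj w)).card)).sum := rfl
    have hsum2 : (∑ v ∈ K, (Finset.univ.filter (G.Adj v)).card)
        = (K.val.map (fun v => (Finset.univ.filter (G.Adj v)).card)).sum := rfl
    rw [hsum1, hsum2]
    apply top_sum (D := degSeq G)
    · rw [← hdeg, hdH]
      exact Multiset.map_le_map hAval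
    · rw [hdG]
      exact Multiset.map_le_map hKval
    · rw [Multiset.card_map, Multiset.card_map]
      exact hAcard
    · intro x hx y hy
      rw [← hdeg, hdH] at hy
      have hmapsub : Finset.univ.val.map (fun w => (Finset.univ.filter (H.Adj w)).card)
          - A.val.map (fun w => (Finset.univ.filter (H.Adj w)).card)
          = (Finset.univ.val - A.val).map (fun w => (Finset.univ.filter (H.Adj w)).card) := by
        have hsplit2 : Finset.univ.val = A.val + (Finset.univ.val - A.val) := by
          rw [add_comm]
          exact (tsub_add_cancel_of_le hAval).symm
        conv_lhs => rw [hsplit2]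
        rw [Multiset.map_add, add_tsub_cancel_left]
      rw [hmapsub] at hy
      obtain ⟨b, hb, rfl⟩ := Multiset.mem_map.mp hy
      obtain ⟨a, ha, rfl⟩ := Multiset.mem_map.mp hx
      have hbA : b ∉ A := by
        rw [← Finset.sdiff_val] at hb
        exact (Finset.mem_sdiff.mp hb).2
      exact hAtop a ha b hbA
  -- total sums
  have htotG : (∑ v ∈ K, (Finset.univ.filter (G.Adj v)).card)
      + (∑ u ∈ Kᶜ, (Finset.univ.filter (G.Adj u)).card) = (degSeq G).sum := by
    rw [Finset.sum_add_sum_compl, hdG]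
    rfl
  have htotH : (∑ v ∈ A, (Finset.univ.filter (H.Adj v)).card)
      + (∑ u ∈ Aᶜ, (Finset.univ.filter (H.Adj u)).card) = (degSeq H).sum := by
    rw [Finset.sum_add_sum_compl, hdH]
    rfl
  have hdegsum : (degSeq H).sum = (degSeq G).sum := by rw [hdeg]
  apply forcing H A e
  · rw [hAcard, ← hSK]
    exact hSAK
  · set m := K.card * (K.card - 1) with hmdef
    omega

open Fin.CommRing in
lemma IsSplit.isChordal {V : Type} {G : SimpleGraph V} (h : IsSplit G) : IsChordal G := by
  obtain ⟨K, hclq, hind⟩ := h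
  intro n hn
  constructor
  intro f
  obtain ⟨m, rfl⟩ : ∃ m, n = m + 2 + 2 := ⟨n - 4, by omega⟩
  have hadj1 : ∀ i : Fin (m+2+2), G.Adj (f i) (f (i+1)) := fun i =>
    f.map_rel_iff.mpr (fin_adj_one i)
  have hcov : ∀ i : Fin (m+2+2), f i ∈ K ∨ f (i+1) ∈ K := by
    intro i
    by_contra hc
    push_neg at hc
    exact (hind hc.1 hc.2 (hadj1 i).ne).2 (hadj1 i)
  have hfactA : ∀ i : Fin (m+2+2), f i ∈ K → f (i+2) ∉ K := by
    intro i hi h2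
    have hne : f i ≠ f (i+2) := fun hEq => (fin_ne_add_two i) (f.injective hEq).symm
    exact fin_not_adj_two i (f.map_rel_iff.mp (hclq hi h2 hne))
  have main : ∀ a : Fin (m+2+2), f a ∈ K → False := by
    intro a ha
    have h2 : f (a+2) ∉ K := hfactA a ha
    have h1 : f (a+1) ∈ K := by
      rcases hcov (a+1) with h | h
      · exact h
      · rw [show a+1+1 = a+2 by ring] at h
        exact absurd h h2
    have h3 : f (a+3) ∉ K := by
      have := hfactA (a+1) h1
      rwa [show a+1+2 = a+3 by ring] at this
    rcases hcov (a+2) with h | h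
    · exact h2 h
    · rw [show a+2+1 = a+3 by ring] at h
      exact h3 h
  rcases hcov 0 with h | h
  · exact main 0 h
  · exact main 1 (by rwa [show (0:Fin (m+2+2))+1 = 1 by ring] at h)

lemma IsSplit.induce_isSplit {V : Type} {G : SimpleGraph V} (h : IsSplit G) (s : Set V) :
    IsSplit (G.induce s) := by
  obtain ⟨K, hclq, hind⟩ := h
  refine ⟨Subtype.val ⁻¹' K, ?_, ?_⟩
  · intro x hx y hy hxy
    exact hclq hx hy (fun hc => hxy (Subtype.ext hc))
  · intro x hx y hy hxy
    refine ⟨hxy, fun hadj => ?_⟩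
    have hadj' : G.Adj ↑x ↑y := hadj
    exact (hind hx hy hadj'.ne).2 hadj'


/-- A split graph is a hereditary chordal-unigraph iff it is a hereditary
unigraph. -/
theorem split_hereditaryChordalUnigraph_iff
    {V : Type} [Fintype V] (G : SimpleGraph V) (hsplit : IsSplit G) :
    IsHereditaryChordalUnigraph G ↔ IsHereditaryUnigraph G := by
  have hind : ∀ s : Finset V, IsSplit (G.induce (s : Set V)) := fun s =>
    hsplit.induce_isSplit _
  constructor
  · intro h s
    intro W _ H hdeg
    exact (h s).2 W H (isSplit_of_degSeq_eq (hind s) hdeg).isChordal hdeg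
  · intro h s
    exact ⟨(hind s).isChordal, fun W _ H _ hdeg => h s W H hdeg⟩
end

section
/- For natural numbers k, m ≥ 0, let G_{k,m} be the graph with vertices a, b, c, d, v_1, …, v_k, w_1, …, w_m whose edges are: ab, cd, all pairs among {v_1, …, v_k, w_1, …, w_m}, each v_i adjacent to a, b, and d, and each w_j adjacent to a, c, and d. Then every chordal graph whose degree sequence, as a multiset, equals ((k+m+2)^{k+m}, (k+m+1)^2, k+1, m+1) is isomorphic to G_{k,m}; that is, G_{k,m} is a chordal-unigraph. -/
open SimpleGraph

/-- The graph `G_{k,m}`: vertices `a = inl 0`, `b = inl 1`, `c = inl 2`,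
`d = inl 3`, `v_1, …, v_k` (the `inr (inl i)`) and `w_1, …, w_m`
(the `inr (inr j)`); edges `ab`, `cd`, all pairs among the `v_i`'s and `w_j`'s,
each `v_i` adjacent to `a`, `b`, `d`, and each `w_j` adjacent to `a`, `c`, `d`. -/
def Gkm (k m : ℕ) : SimpleGraph (Fin 4 ⊕ (Fin k ⊕ Fin m)) :=
  SimpleGraph.fromRel fun x y =>
    match x, y with
    | Sum.inl i, Sum.inl j => (i = 0 ∧ j = 1) ∨ (i = 2 ∧ j = 3)
    | Sum.inr _, Sum.inr _ => True
    | Sum.inl i, Sum.inr (Sum.inl _) => i = 0 ∨ i = 1 ∨ i = 3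
    | Sum.inl i, Sum.inr (Sum.inr _) => i = 0 ∨ i = 2 ∨ i = 3
    | Sum.inr _, Sum.inl _ => False

open Finset

lemma no2K2 {W : Type} {H : SimpleGraph W} (hch : IsChordal H) {p q x y : W}
    (hpx' : p ≠ x) (hqy' : q ≠ y) (hpx : ¬H.Adj p x) (hqy : ¬H.Adj q y)
    (hpq : H.Adj p q) (hqx : H.Adj q x) (hxy : H.Adj x y) (hyp : H.Adj y p) : False := by
  have h1 := hpq.ne
  have h2 := hqx.ne
  have h3 := hxy.ne
  have h4 := hyp.ne'
  have hxp : ¬H.Adj x p := fun h => hpx h.symm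
  have hyq : ¬H.Adj y q := fun h => hqy h.symm
  refine (hch 4 le_rfl).false ⟨⟨![p,q,x,y], ?_⟩, ?_⟩
  · intro a b hab
    fin_cases a <;> fin_cases b <;> simp_all <;> omega
  · intro a b
    show H.Adj (![p, q, x, y] a) (![p, q, x, y] b) ↔ _
    fin_cases a <;> fin_cases b <;>
      simp [cycleGraph_adj, hpq, hqx, hxy, hyp, hpx, hqy, hpq.symm, hqx.symm, hxy.symm,
        hyp.symm, hxp, hyq, H.irrefl, Fin.ext_iff] <;> decide

lemma pick_step {α : Type} [DecidableEq α] (deg : α → ℕ) (s : Multiset α) (M : Multiset ℕ) (t : ℕ)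
    (h : s.map deg = M) (ht : t ∈ M) :
    ∃ a ∈ s, deg a = t ∧ (s.erase a).map deg = M.erase t := by
  subst h
  obtain ⟨a, ha, rfl⟩ := Multiset.mem_map.mp ht
  refine ⟨a, ha, rfl, ?_⟩
  conv_rhs => rw [← Multiset.cons_erase ha, Multiset.map_cons, Multiset.erase_cons_head]

lemma count_erase {α : Type} [DecidableEq α] (s : Multiset α) (a b : α) :
    (s.erase b).count a = s.count a - if a = b then 1 else 0 := by
  by_cases h : a = b
  · subst h; simp [Multiset.count_erase_self]
  · simp [h, Multiset.count_erase_of_ne h]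

lemma extract {W : Type} [Fintype W] [DecidableEq W] (deg : W → ℕ) (k m : ℕ)
    (hdeg : Finset.univ.val.map deg = Multiset.replicate (k+m) (k+m+2)
      + Multiset.replicate 2 (k+m+1) + {k+1, m+1}) :
    ∃ a b c d : W, a ≠ b ∧ a ≠ c ∧ a ≠ d ∧ b ≠ c ∧ b ≠ d ∧ c ≠ d ∧
      deg a = k+m+1 ∧ deg d = k+m+1 ∧ deg b = k+1 ∧ deg c = m+1 ∧
      (∀ v, v ≠ a → v ≠ b → v ≠ c → v ≠ d → deg v = k+m+2) ∧ Fintype.card W = k+m+4 := by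
  set M : Multiset ℕ := Multiset.replicate (k+m) (k+m+2)
      + Multiset.replicate 2 (k+m+1) + {k+1, m+1} with hM
  have hcnt : ∀ t, M.count t = (if k+m+2 = t then k+m else 0) + (if k+m+1 = t then 2 else 0)
      + ((if t = k+1 then 1 else 0) + (if t = m+1 then 1 else 0)) := by
    intro t
    simp [hM, Multiset.count_replicate, Multiset.insert_eq_cons, Multiset.count_cons,
      Multiset.count_singleton]
    split_ifs <;> omega
  have hcard : Fintype.card W = k+m+4 := by
    have := congrArg Multiset.card hdeg
    simpa [hM, Multiset.card_map] using this
  obtain ⟨a, ha, hda, h1⟩ := pick_step deg _ M (k+m+1) hdeg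
    (Multiset.count_pos.mp (by rw [hcnt]; split_ifs <;> omega))
  obtain ⟨d, hd, hdd, h2⟩ := pick_step deg _ _ (k+m+1) h1
    (Multiset.count_pos.mp (by rw [count_erase, hcnt]; split_ifs <;> omega))
  obtain ⟨b, hb, hdb, h3⟩ := pick_step deg _ _ (k+1) h2
    (Multiset.count_pos.mp (by rw [count_erase, count_erase, hcnt]; split_ifs <;> omega))
  obtain ⟨c, hc, hdc, h4⟩ := pick_step deg _ _ (m+1) h3
    (Multiset.count_pos.mp (by
      rw [count_erase, count_erase, count_erase, hcnt]; split_ifs <;> omega))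
  have nd0 : (Finset.univ.val : Multiset W).Nodup := Finset.univ.nodup
  have nd1 := nd0.erase (a := a)
  have nd2 := nd1.erase (a := d)
  have nd3 := nd2.erase (a := b)
  -- distinctness
  have had : d ≠ a := fun h => (nd0.notMem_erase (a := a)) (h ▸ hd)
  have hb1 : b ∈ Finset.univ.val.erase a := Multiset.mem_of_mem_erase hb
  have hba : b ≠ a := fun h => nd0.notMem_erase (h ▸ hb1)
  have hbd : b ≠ d := fun h => nd1.notMem_erase (h ▸ hb)
  have hc2 : c ∈ (Finset.univ.val.erase a).erase d := Multiset.mem_of_mem_erase hc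
  have hc1 : c ∈ Finset.univ.val.erase a := Multiset.mem_of_mem_erase hc2
  have hca : c ≠ a := fun h => nd0.notMem_erase (h ▸ hc1)
  have hcd : c ≠ d := fun h => nd1.notMem_erase (h ▸ hc2)
  have hcb : c ≠ b := fun h => nd2.notMem_erase (h ▸ hc)
  refine ⟨a, b, c, d, hba.symm, hca.symm, had.symm, hcb.symm, hbd, hcd, hda, hdd, hdb, hdc, ?_, hcard⟩
  intro v hva hvb hvc hvd
  have hv4 : v ∈ (((Finset.univ.val.erase a).erase d).erase b).erase c := by
    rw [Multiset.mem_erase_of_ne hvc, Multiset.mem_erase_of_ne hvb,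
      Multiset.mem_erase_of_ne hvd, Multiset.mem_erase_of_ne hva]
    exact Finset.mem_univ_val v
  have hrep : (((M.erase (k+m+1)).erase (k+m+1)).erase (k+1)).erase (m+1)
      = Multiset.replicate (k+m) (k+m+2) := by
    ext t
    rw [count_erase, count_erase, count_erase, count_erase, hcnt, Multiset.count_replicate]
    split_ifs <;> omega
  have : deg v ∈ Multiset.replicate (k+m) (k+m+2) := by
    rw [← hrep, ← h4]
    exact Multiset.mem_map_of_mem deg hv4
  exact Multiset.eq_of_mem_replicate this

def CSpec {W : Type} [Fintype W] [DecidableEq W] (C : SimpleGraph W) (k m : ℕ) : Prop :=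
  ∃ (a b c d : W) (Pv Pw : Finset W),
    a ≠ b ∧ a ≠ c ∧ a ≠ d ∧ b ≠ c ∧ b ≠ d ∧ c ≠ d ∧
    Finset.univ \ {a, b, c, d} = Pv ∪ Pw ∧ Disjoint Pv Pw ∧ Pv.card = k ∧ Pw.card = m ∧
    ¬C.Adj a b ∧ ¬C.Adj c d ∧ C.Adj a c ∧ C.Adj a d ∧ C.Adj b c ∧ C.Adj b d ∧
    (∀ v ∈ Pv, ∀ u, C.Adj v u ↔ u = c) ∧ (∀ w ∈ Pw, ∀ u, C.Adj w u ↔ u = b)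


lemma enum_finset {W : Type} [DecidableEq W] (s : Finset W) (k : ℕ) (h : s.card = k) :
    ∃ e : Fin k → W, Function.Injective e ∧ ∀ i, e i ∈ s := by
  refine ⟨fun i => ↑(s.equivFin.symm (finCongr h.symm i)), ?_, fun i => (s.equivFin.symm _).2⟩
  intro i j hij
  have := s.equivFin.symm.injective (Subtype.coe_injective hij)
  simpa using (finCongr h.symm).injective this

lemma cspec_iso {W : Type} [Fintype W] [DecidableEq W] (H : SimpleGraph W) (k m : ℕ)
    (h : CSpec Hᶜ k m) : Nonempty (H ≃g Gkm k m) := by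
  obtain ⟨a, b, c, d, Pv, Pw, hab, hac, had, hbc, hbd, hcd, hpart, hdisj, hkv, hmw,
    nAB, nCD, aAC, aAD, aBC, aBD, hPv, hPw⟩ := h
  -- basic H adjacency among core
  have Hab : H.Adj a b := by
    by_contra hh; exact nAB ((H.compl_adj a b).mpr ⟨hab, hh⟩)
  have Hcd : H.Adj c d := by
    by_contra hh; exact nCD ((H.compl_adj c d).mpr ⟨hcd, hh⟩)
  have nHac : ¬H.Adj a c := ((H.compl_adj a c).mp aAC).2
  have nHad : ¬H.Adj a d := ((H.compl_adj a d).mp aAD).2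
  have nHbc : ¬H.Adj b c := ((H.compl_adj b c).mp aBC).2
  have nHbd : ¬H.Adj b d := ((H.compl_adj b d).mp aBD).2
  -- pendant adjacency facts
  have hVadj : ∀ v ∈ Pv, ∀ u, u ≠ v → u ≠ c → H.Adj v u := by
    intro v hv u huv huc
    by_contra hh
    exact huc ((hPv v hv u).mp ((H.compl_adj v u).mpr ⟨fun e => huv e.symm, hh⟩))
  have hVc : ∀ v ∈ Pv, ¬H.Adj v c := by
    intro v hv hh
    exact ((H.compl_adj v c).mp ((hPv v hv c).mpr rfl)).2 hh
  have hWadj : ∀ w ∈ Pw, ∀ u, u ≠ w → u ≠ b → H.Adj w u := by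
    intro w hw u huw hub
    by_contra hh
    exact hub ((hPw w hw u).mp ((H.compl_adj w u).mpr ⟨fun e => huw e.symm, hh⟩))
  have hWb : ∀ w ∈ Pw, ¬H.Adj w b := by
    intro w hw hh
    exact ((H.compl_adj w b).mp ((hPw w hw b).mpr rfl)).2 hh
  -- membership facts
  have hVne : ∀ x ∈ Pv, x ≠ a ∧ x ≠ b ∧ x ≠ c ∧ x ≠ d := by
    intro x hx
    have : x ∈ Finset.univ \ {a, b, c, d} := hpart ▸ Finset.mem_union_left _ hx
    simpa using (Finset.mem_sdiff.mp this).2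
  have hWne : ∀ x ∈ Pw, x ≠ a ∧ x ≠ b ∧ x ≠ c ∧ x ≠ d := by
    intro x hx
    have : x ∈ Finset.univ \ {a, b, c, d} := hpart ▸ Finset.mem_union_right _ hx
    simpa using (Finset.mem_sdiff.mp this).2
  have hVW : ∀ x ∈ Pv, ∀ y ∈ Pw, x ≠ y := by
    intro x hx y hy e
    exact (Finset.disjoint_left.mp hdisj hx) (e ▸ hy)
  -- cardinality
  have hsub : ({a, b, c, d} : Finset W) ⊆ Finset.univ := Finset.subset_univ _
  have hc4 : ({a, b, c, d} : Finset W).card = 4 := by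
    rw [Finset.card_insert_of_notMem (by simp [hab, hac, had]),
      Finset.card_insert_of_notMem (by simp [hbc, hbd]),
      Finset.card_insert_of_notMem (by simp [hcd]), Finset.card_singleton]
  have hcardW : Fintype.card W = k + m + 4 := by
    have h1 : (Finset.univ \ {a, b, c, d} : Finset W).card = Fintype.card W - 4 := by
      rw [Finset.card_sdiff_of_subset hsub, hc4, Finset.card_univ]
    have h2 : (Pv ∪ Pw).card = k + m := by
      rw [Finset.card_union_of_disjoint hdisj, hkv, hmw]
    have h3 : 4 ≤ Fintype.card W := hc4 ▸ (Finset.card_le_card hsub).trans_eq Finset.card_univ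
    rw [hpart, h2] at h1
    omega
  -- enumerations of Pv and Pw
  obtain ⟨eV, hVinj, hVmem⟩ := enum_finset Pv k hkv
  obtain ⟨eW, hWinj, hWmem⟩ := enum_finset Pw m hmw
  -- the map
  let F : (Fin 4 ⊕ (Fin k ⊕ Fin m)) → W :=
    Sum.elim ![a, b, c, d] (Sum.elim eV eW)
  have hFinj : Function.Injective F := by
    intro x y hxy
    rcases x with i | v | w <;> rcases y with j | v' | w'
    · fin_cases i <;> fin_cases j <;>
        simp only [F, Sum.elim_inl, Matrix.cons_val_zero, Matrix.cons_val_one,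
          Matrix.head_cons, Matrix.cons_val_two, Matrix.tail_cons, Matrix.cons_val_three,
          Matrix.cons_val_fin_one] at hxy ⊢ <;>
        first
          | rfl
          | exact absurd hxy hab | exact absurd hxy.symm hab
          | exact absurd hxy hac | exact absurd hxy.symm hac
          | exact absurd hxy had | exact absurd hxy.symm had
          | exact absurd hxy hbc | exact absurd hxy.symm hbc
          | exact absurd hxy hbd | exact absurd hxy.symm hbd
          | exact absurd hxy hcd | exact absurd hxy.symm hcd
    · have := hVne _ (hVmem v')
      fin_cases i <;>
        simp only [F, Sum.elim_inl, Sum.elim_inr, Matrix.cons_val_zero, Matrix.cons_val_one,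
          Matrix.head_cons, Matrix.cons_val_two, Matrix.tail_cons, Matrix.cons_val_three] at hxy <;>
        [exact absurd hxy.symm this.1; exact absurd hxy.symm this.2.1;
         exact absurd hxy.symm this.2.2.1; exact absurd hxy.symm this.2.2.2]
    · have := hWne _ (hWmem w')
      fin_cases i <;>
        simp only [F, Sum.elim_inl, Sum.elim_inr, Matrix.cons_val_zero, Matrix.cons_val_one,
          Matrix.head_cons, Matrix.cons_val_two, Matrix.tail_cons, Matrix.cons_val_three] at hxy <;>
        [exact absurd hxy.symm this.1; exact absurd hxy.symm this.2.1;
         exact absurd hxy.symm this.2.2.1; exact absurd hxy.symm this.2.2.2]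
    · have := hVne _ (hVmem v)
      fin_cases j <;>
        simp only [F, Sum.elim_inl, Sum.elim_inr, Matrix.cons_val_zero, Matrix.cons_val_one,
          Matrix.head_cons, Matrix.cons_val_two, Matrix.tail_cons, Matrix.cons_val_three] at hxy <;>
        [exact absurd hxy this.1; exact absurd hxy this.2.1;
         exact absurd hxy this.2.2.1; exact absurd hxy this.2.2.2]
    · simp only [F, Sum.elim_inr, Sum.inr.injEq, Sum.inl.injEq] at hxy ⊢
      exact hVinj hxy
    · exact absurd hxy (hVW _ (hVmem v) _ (hWmem w'))
    · have := hWne _ (hWmem w)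
      fin_cases j <;>
        simp only [F, Sum.elim_inl, Sum.elim_inr, Matrix.cons_val_zero, Matrix.cons_val_one,
          Matrix.head_cons, Matrix.cons_val_two, Matrix.tail_cons, Matrix.cons_val_three] at hxy <;>
        [exact absurd hxy this.1; exact absurd hxy this.2.1;
         exact absurd hxy this.2.2.1; exact absurd hxy this.2.2.2]
    · exact absurd hxy.symm (hVW _ (hVmem v') _ (hWmem w))
    · simp only [F, Sum.elim_inr, Sum.inr.injEq, Sum.inr.injEq] at hxy ⊢
      exact hWinj hxy
  have hFbij : Function.Bijective F :=
    (Fintype.bijective_iff_injective_and_card F).mpr ⟨hFinj, by simp [hcardW]; omega⟩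
  -- adjacency helper facts
  have hVca : ∀ (v : Fin k) (u : W), u ≠ eV v → u ≠ c → H.Adj (eV v) u :=
    fun v u h1 h2 => hVadj _ (hVmem v) u h1 h2
  have hWba : ∀ (j : Fin m) (u : W), u ≠ eW j → u ≠ b → H.Adj (eW j) u :=
    fun j u h1 h2 => hWadj _ (hWmem j) u h1 h2
  have coreV : ∀ (i : Fin 4) (v : Fin k),
      H.Adj (![a, b, c, d] i) (eV v) ↔ (Gkm k m).Adj (Sum.inl i) (Sum.inr (Sum.inl v)) := by
    intro i v
    have hne := hVne _ (hVmem v)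
    fin_cases i <;>
      simp only [Matrix.cons_val_zero, Matrix.cons_val_one, Matrix.head_cons,
        Matrix.cons_val_two, Matrix.tail_cons, Matrix.cons_val_three]
    · exact iff_of_true (hVca v a hne.1.symm hac).symm (by simp [Gkm, SimpleGraph.fromRel_adj])
    · exact iff_of_true (hVca v b hne.2.1.symm hbc).symm (by simp [Gkm, SimpleGraph.fromRel_adj])
    · exact iff_of_false (fun hh => hVc _ (hVmem v) hh.symm)
        (by simp [Gkm, SimpleGraph.fromRel_adj])
    · exact iff_of_true (hVca v d hne.2.2.2.symm hcd.symm).symm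
        (by simp [Gkm, SimpleGraph.fromRel_adj])
  have coreW : ∀ (i : Fin 4) (w : Fin m),
      H.Adj (![a, b, c, d] i) (eW w) ↔ (Gkm k m).Adj (Sum.inl i) (Sum.inr (Sum.inr w)) := by
    intro i w
    have hne := hWne _ (hWmem w)
    fin_cases i <;>
      simp only [Matrix.cons_val_zero, Matrix.cons_val_one, Matrix.head_cons,
        Matrix.cons_val_two, Matrix.tail_cons, Matrix.cons_val_three]
    · exact iff_of_true (hWba w a hne.1.symm hab).symm (by simp [Gkm, SimpleGraph.fromRel_adj])
    · exact iff_of_false (fun hh => hWb _ (hWmem w) hh.symm)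
        (by simp [Gkm, SimpleGraph.fromRel_adj])
    · exact iff_of_true (hWba w c hne.2.2.1.symm hbc.symm).symm
        (by simp [Gkm, SimpleGraph.fromRel_adj])
    · exact iff_of_true (hWba w d hne.2.2.2.symm hbd.symm).symm
        (by simp [Gkm, SimpleGraph.fromRel_adj])
  refine ⟨(RelIso.mk (Equiv.ofBijective F hFbij) ?_).symm⟩
  intro x y
  show H.Adj (F x) (F y) ↔ (Gkm k m).Adj x y
  rcases x with i | v | w <;> rcases y with j | v' | w'
  · -- core-core
    simp only [F, Sum.elim_inl]
    fin_cases i <;> fin_cases j <;>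
      simp only [Matrix.cons_val_zero, Matrix.cons_val_one, Matrix.head_cons,
        Matrix.cons_val_two, Matrix.tail_cons, Matrix.cons_val_three] <;>
      first
        | exact iff_of_false (H.irrefl) (by simp [Gkm, SimpleGraph.fromRel_adj])
        | exact iff_of_true Hab (by simp [Gkm, SimpleGraph.fromRel_adj])
        | exact iff_of_true Hab.symm (by simp [Gkm, SimpleGraph.fromRel_adj])
        | exact iff_of_true Hcd (by simp [Gkm, SimpleGraph.fromRel_adj])
        | exact iff_of_true Hcd.symm (by simp [Gkm, SimpleGraph.fromRel_adj])
        | exact iff_of_false nHac (by simp [Gkm, SimpleGraph.fromRel_adj])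
        | exact iff_of_false (fun h => nHac h.symm) (by simp [Gkm, SimpleGraph.fromRel_adj])
        | exact iff_of_false nHad (by simp [Gkm, SimpleGraph.fromRel_adj])
        | exact iff_of_false (fun h => nHad h.symm) (by simp [Gkm, SimpleGraph.fromRel_adj])
        | exact iff_of_false nHbc (by simp [Gkm, SimpleGraph.fromRel_adj])
        | exact iff_of_false (fun h => nHbc h.symm) (by simp [Gkm, SimpleGraph.fromRel_adj])
        | exact iff_of_false nHbd (by simp [Gkm, SimpleGraph.fromRel_adj])
        | exact iff_of_false (fun h => nHbd h.symm) (by simp [Gkm, SimpleGraph.fromRel_adj])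
  · exact coreV i v'
  · exact coreW i w'
  · -- V-core
    rw [H.adj_comm, (Gkm k m).adj_comm]
    exact coreV j v
  · -- V-V
    simp only [F, Sum.elim_inr, Sum.elim_inl]
    by_cases hvv : v = v'
    · subst hvv
      exact iff_of_false H.irrefl (Gkm k m).irrefl
    · refine iff_of_true (hVca v' (eV v) (fun e => hvv (hVinj e)) (hVne _ (hVmem v)).2.2.1).symm ?_
      simp [Gkm, SimpleGraph.fromRel_adj, hvv]
  · -- V-W
    simp only [F, Sum.elim_inr, Sum.elim_inl]
    refine iff_of_true (hVca v (eW w') (fun e => hVW _ (hVmem v) _ (hWmem w') e.symm)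
      (hWne _ (hWmem w')).2.2.1) ?_
    · simp [Gkm, SimpleGraph.fromRel_adj]
  · -- W-core
    rw [H.adj_comm, (Gkm k m).adj_comm]
    exact coreW j w
  · -- W-V
    simp only [F, Sum.elim_inr, Sum.elim_inl]
    refine iff_of_true (hWba w (eV v') (fun e => hVW _ (hVmem v') _ (hWmem w) e)
      (hVne _ (hVmem v')).2.1) ?_
    · simp [Gkm, SimpleGraph.fromRel_adj]
  · -- W-W
    simp only [F, Sum.elim_inr]
    by_cases hww : w = w'
    · subst hww
      exact iff_of_false H.irrefl (Gkm k m).irrefl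
    · refine iff_of_true (hWba w' (eW w) (fun e => hww (hWinj e)) (hWne _ (hWmem w)).2.1).symm ?_
      simp [Gkm, SimpleGraph.fromRel_adj, hww]

def NoTwoK2 {W : Type} (C : SimpleGraph W) : Prop :=
  ∀ p x q y : W, C.Adj p x → C.Adj q y → p ≠ q → p ≠ y → x ≠ q → x ≠ y →
    ¬C.Adj p q → ¬C.Adj p y → ¬C.Adj x q → ¬C.Adj x y → False

lemma two_mem {W : Type} [DecidableEq W] {S : Finset W} {u : W} (h2 : S.card = 2) (hu : u ∈ S) :
    ∃ t, t ≠ u ∧ S = {u, t} := by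
  obtain ⟨x, y, hxy, rfl⟩ := Finset.card_eq_two.mp h2
  rcases Finset.mem_insert.mp hu with rfl | hu'
  · exact ⟨y, hxy.symm, rfl⟩
  · rcases Finset.mem_singleton.mp hu' with rfl
    exact ⟨x, hxy, Finset.pair_comm x u⟩

lemma master_arith (pa pb pc pd ea eb ec ed k m : ℕ)
    (h1 : ea + pa = 2) (h2 : eb + pb = m + 2) (h3 : ec + pc = k + 2) (h4 : ed + pd = 2)
    (h5 : pa + pb + pc + pd = k + m)
    (b1 : ea ≤ 3) (b2 : eb ≤ 3) (b3 : ec ≤ 3) (b4 : ed ≤ 3) :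
    (pa = 0 ∧ pd = 0 ∧ eb = 2 ∧ ec = 2) ∨
    (pa = 0 ∧ pd = 0 ∧ eb = 3 ∧ ec = 1) ∨
    (pa = 0 ∧ pd = 0 ∧ eb = 1 ∧ ec = 3) ∨
    (pa + pd = 1 ∧ eb = 3 ∧ ec = 2) ∨
    (pa + pd = 1 ∧ eb = 2 ∧ ec = 3) ∨
    (eb = 3 ∧ ec = 3 ∧ pa + pd = 2) := by
  omega

set_option maxHeartbeats 4000000 in
lemma classify {W : Type} [Fintype W] [DecidableEq W] (C : SimpleGraph W) [DecidableRel C.Adj]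
    (k m : ℕ) (hno : NoTwoK2 C) (α β γ δ : W)
    (hαβ : α ≠ β) (hαγ : α ≠ γ) (hαδ : α ≠ δ) (hβγ : β ≠ γ) (hβδ : β ≠ δ) (hγδ : γ ≠ δ)
    (dα : C.degree α = 2) (dδ : C.degree δ = 2) (dβ : C.degree β = m + 2)
    (dγ : C.degree γ = k + 2)
    (dP : ∀ v, v ≠ α → v ≠ β → v ≠ γ → v ≠ δ → C.degree v = 1)
    (hcard : Fintype.card W = k + m + 4) :
    CSpec C k m := by
  classical
  set Qs : Finset W := {α, β, γ, δ} with hQs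
  have hQcard : Qs.card = 4 := by
    rw [hQs, Finset.card_insert_of_notMem (by simp [hαβ, hαγ, hαδ]),
      Finset.card_insert_of_notMem (by simp [hβγ, hβδ]),
      Finset.card_insert_of_notMem (by simp [hγδ]), Finset.card_singleton]
  set P : Finset W := Finset.univ \ Qs with hP
  have hPmem : ∀ v, v ∈ P ↔ v ≠ α ∧ v ≠ β ∧ v ≠ γ ∧ v ≠ δ := by
    intro v; simp [hP, hQs]
  have hPdeg : ∀ v ∈ P, C.degree v = 1 := by
    intro v hv
    obtain ⟨h1, h2, h3, h4⟩ := (hPmem v).mp hv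
    exact dP v h1 h2 h3 h4
  have hPcard : P.card = k + m := by
    rw [hP, Finset.card_sdiff_of_subset (Finset.subset_univ _), hQcard, Finset.card_univ, hcard]
    omega
  have hQmem : ∀ x, x ∈ Qs ↔ x = α ∨ x = β ∨ x = γ ∨ x = δ := by intro x; simp [hQs]
  have hαQ : α ∈ Qs := by simp [hQs]
  have hβQ : β ∈ Qs := by simp [hQs]
  have hγQ : γ ∈ Qs := by simp [hQs]
  have hδQ : δ ∈ Qs := by simp [hQs]
  have hPof : ∀ v, v ∉ Qs → v ∈ P := by
    intro v hv; rw [hP]; exact Finset.mem_sdiff.mpr ⟨Finset.mem_univ v, hv⟩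
  have hPnotQ : ∀ v ∈ P, v ∉ Qs := by
    intro v hv; rw [hP] at hv; exact (Finset.mem_sdiff.mp hv).2
  clear_value P Qs
  have hNmem : ∀ x u : W, u ∈ C.neighborFinset x ↔ C.Adj x u := by
    intro x u; exact C.mem_neighborFinset x u
  have hNcard : ∀ x : W, (C.neighborFinset x).card = C.degree x := by
    intro x; rfl
  by_cases hkm : k + m = 0
  · -- base case : k = m = 0
    have hdeg2 : ∀ x, C.degree x = 2 := by
      intro x
      by_cases hx : x ∈ Qs
      · rcases (hQmem x).mp hx with rfl | rfl | rfl | rfl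
        · exact dα
        · rw [dβ]; omega
        · rw [dγ]; omega
        · exact dδ
      · exfalso
        have hvP : x ∈ P := hPof x hx
        have h0 : P.card = 0 := by omega
        rw [Finset.card_eq_zero] at h0
        rw [h0] at hvP
        exact absurd hvP (Finset.notMem_empty x)
    obtain ⟨x, y, hxy, hNγ⟩ := Finset.card_eq_two.mp ((hNcard γ).trans (hdeg2 γ))
    have hxQ : C.Adj γ x := (hNmem γ x).mp (hNγ ▸ Finset.mem_insert_self x {y})
    have hyQ : C.Adj γ y :=
      (hNmem γ y).mp (hNγ ▸ Finset.mem_insert_of_mem (Finset.mem_singleton_self y))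
    have hxγ : x ≠ γ := fun e => C.irrefl (e ▸ hxQ)
    have hyγ : y ≠ γ := fun e => C.irrefl (e ▸ hyQ)
    have hz : ∃ z, z ≠ γ ∧ z ≠ x ∧ z ≠ y ∧ ∀ v : W, v = γ ∨ v = x ∨ v = y ∨ v = z := by
      have h4 : Fintype.card W = 4 := by omega
      have hsub : ({γ, x, y} : Finset W).card = 3 := by
        rw [Finset.card_insert_of_notMem (by simp [hxγ.symm, hyγ.symm]),
          Finset.card_insert_of_notMem (by simp [hxy]), Finset.card_singleton]
      have h1 : (Finset.univ \ {γ, x, y} : Finset W).card = 1 := by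
        rw [Finset.card_sdiff_of_subset (Finset.subset_univ _), hsub, Finset.card_univ, h4]
      obtain ⟨z, hzs⟩ := Finset.card_eq_one.mp h1
      have hzmem : z ∈ Finset.univ \ ({γ, x, y} : Finset W) := hzs ▸ Finset.mem_singleton_self z
      have hz3 := (Finset.mem_sdiff.mp hzmem).2
      simp only [Finset.mem_insert, Finset.mem_singleton, not_or] at hz3
      refine ⟨z, hz3.1, hz3.2.1, hz3.2.2, ?_⟩
      intro v
      by_cases hv : v ∈ ({γ, x, y} : Finset W)
      · simp only [Finset.mem_insert, Finset.mem_singleton] at hv; tauto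
      · have hv2 : v ∈ Finset.univ \ ({γ, x, y} : Finset W) :=
          Finset.mem_sdiff.mpr ⟨Finset.mem_univ v, hv⟩
        rw [hzs] at hv2
        right; right; right; exact Finset.mem_singleton.mp hv2
    obtain ⟨z, hzγ, hzx, hzy, hall⟩ := hz
    have hnγz : ¬C.Adj γ z := by
      intro hadj
      have hm2 : z ∈ C.neighborFinset γ := (hNmem γ z).mpr hadj
      rw [hNγ] at hm2
      simp only [Finset.mem_insert, Finset.mem_singleton] at hm2
      tauto
    have hNz : C.neighborFinset z = {x, y} := by
      apply Finset.eq_of_subset_of_card_le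
      · intro u hu
        have hadj : C.Adj z u := (hNmem z u).mp hu
        have huz : u ≠ z := fun e => C.irrefl (e ▸ hadj)
        have huγ : u ≠ γ := fun e => hnγz (e ▸ hadj).symm
        rcases hall u with h | h | h | h
        · exact absurd h huγ
        · rw [h]; exact Finset.mem_insert_self x {y}
        · rw [h]; exact Finset.mem_insert_of_mem (Finset.mem_singleton_self y)
        · exact absurd h huz
      · rw [hNcard z, hdeg2 z, Finset.card_insert_of_notMem (by simp [hxy]),
          Finset.card_singleton]
    have hzxQ : C.Adj z x := (hNmem z x).mp (hNz ▸ Finset.mem_insert_self x {y})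
    have hzyQ : C.Adj z y :=
      (hNmem z y).mp (hNz ▸ Finset.mem_insert_of_mem (Finset.mem_singleton_self y))
    have hNx : C.neighborFinset x = {γ, z} := by
      apply (Finset.eq_of_subset_of_card_le ?_ ?_).symm
      · intro u hu
        simp only [Finset.mem_insert, Finset.mem_singleton] at hu
        rcases hu with rfl | rfl
        · exact (hNmem x u).mpr hxQ.symm
        · exact (hNmem x u).mpr hzxQ.symm
      · rw [hNcard x, hdeg2 x, Finset.card_insert_of_notMem (by simp [hzγ.symm]),
          Finset.card_singleton]
    have hNy : C.neighborFinset y = {γ, z} := by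
      apply (Finset.eq_of_subset_of_card_le ?_ ?_).symm
      · intro u hu
        simp only [Finset.mem_insert, Finset.mem_singleton] at hu
        rcases hu with rfl | rfl
        · exact (hNmem y u).mpr hyQ.symm
        · exact (hNmem y u).mpr hzyQ.symm
      · rw [hNcard y, hdeg2 y, Finset.card_insert_of_notMem (by simp [hzγ.symm]),
          Finset.card_singleton]
    have hnxy : ¬C.Adj x y := by
      intro hadj
      have hm2 : y ∈ C.neighborFinset x := (hNmem x y).mpr hadj
      rw [hNx] at hm2
      simp only [Finset.mem_insert, Finset.mem_singleton] at hm2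
      rcases hm2 with rfl | rfl
      · exact hyγ rfl
      · exact hzy rfl
    have hpart : Finset.univ \ ({x, y, γ, z} : Finset W) = (∅ : Finset W) ∪ ∅ := by
      rw [Finset.union_empty]
      apply Finset.eq_empty_of_forall_notMem
      intro v hv
      rw [Finset.mem_sdiff] at hv
      rcases hall v with rfl | rfl | rfl | rfl <;> simp at hv
    exact ⟨x, y, γ, z, ∅, ∅, hxy, hxγ, hzx.symm, hyγ, hzy.symm, hzγ.symm, hpart,
      Finset.disjoint_empty_left ∅, by rw [Finset.card_empty]; omega,
      by rw [Finset.card_empty]; omega, hnxy, hnγz, hxQ.symm, hzxQ.symm, hyQ.symm, hzyQ.symm,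
      by simp, by simp⟩
  · -- main case : k + m ≥ 1
    have hkm1 : 1 ≤ k + m := by omega
    have hbig : ∃ z, 3 ≤ C.degree z := by
      rcases Nat.eq_zero_or_pos k with hk | hk
      · exact ⟨β, by rw [dβ]; omega⟩
      · exact ⟨γ, by rw [dγ]; omega⟩
    have hNex : ∀ p, ∃ u, p ∈ P → C.neighborFinset p = {u} := by
      intro p
      by_cases hp : p ∈ P
      · obtain ⟨u, hu⟩ := Finset.card_eq_one.mp ((hNcard p).trans (hPdeg p hp))
        exact ⟨u, fun _ => hu⟩
      · exact ⟨p, fun h => absurd h hp⟩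
    choose N hN using hNex
    have hNadj : ∀ p ∈ P, C.Adj p (N p) := fun p hp =>
      (hNmem p (N p)).mp ((hN p hp) ▸ Finset.mem_singleton_self _)
    have hNuniq : ∀ p ∈ P, ∀ u, C.Adj p u → u = N p := by
      intro p hp u hu
      have h2 := (hNmem p u).mpr hu
      rw [hN p hp] at h2
      exact Finset.mem_singleton.mp h2
    have hNnadj : ∀ p ∈ P, ∀ u, u ≠ N p → ¬C.Adj p u :=
      fun p hp u hne hadj => hne (hNuniq p hp u hadj)
    have hPQdisj : ∀ p ∈ P, ∀ x ∈ Qs, p ≠ x := by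
      intro p hp x hx e
      exact hPnotQ p hp (e ▸ hx)
    have stepA : ∀ p ∈ P, N p ∈ Qs := by
      intro p hp
      by_contra hq
      have hqP : N p ∈ P := hPof _ hq
      have hpq : C.Adj p (N p) := hNadj p hp
      have hNqp : p = N (N p) := hNuniq (N p) hqP p hpq.symm
      obtain ⟨z, hz3⟩ := hbig
      have hzp : z ≠ p := fun e => by rw [e] at hz3; have := hPdeg p hp; omega
      have hzq : z ≠ N p := fun e => by rw [e] at hz3; have := hPdeg _ hqP; omega
      have hx : ∃ x ∈ C.neighborFinset z, x ≠ p ∧ x ≠ N p := by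
        by_contra hcon
        push_neg at hcon
        have hsub : C.neighborFinset z ⊆ {p, N p} := by
          intro u hu
          by_cases h1 : u = p
          · exact Finset.mem_insert.mpr (Or.inl h1)
          · exact Finset.mem_insert.mpr (Or.inr (Finset.mem_singleton.mpr (hcon u hu h1)))
        have h2 := Finset.card_le_card hsub
        have h3 : ({p, N p} : Finset W).card ≤ 2 :=
          (Finset.card_insert_le _ _).trans (by rw [Finset.card_singleton])
        rw [hNcard z] at h2
        omega
      obtain ⟨x, hxz, hxp, hxq⟩ := hx
      have hzx : C.Adj z x := (hNmem z x).mp hxz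
      exact hno p (N p) z x hpq hzx hzp.symm hxp.symm hzq.symm hxq.symm
        (hNnadj p hp z hzq) (hNnadj p hp x hxq)
        (hNnadj (N p) hqP z (fun e => hzp (e.trans hNqp.symm)))
        (hNnadj (N p) hqP x (fun e => hxp (e.trans hNqp.symm)))
    have stepB : ∀ p ∈ P, ∀ q ∈ P, N p ≠ N q → C.Adj (N p) (N q) := by
      intro p hp q hq hne
      by_contra hnadj
      have hpq : p ≠ q := fun e => hne (e ▸ rfl)
      exact hno p (N p) q (N q) (hNadj p hp) (hNadj q hq) hpq
        (hPQdisj p hp (N q) (stepA q hq))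
        ((hPQdisj q hq (N p) (stepA p hp)).symm) hne
        (hNnadj p hp q (hPQdisj q hq (N p) (stepA p hp)))
        (hNnadj p hp (N q) (fun e => hne e.symm))
        (fun h => (hNnadj q hq (N p) hne) h.symm) hnadj
    have stepB' : ∀ p ∈ P, ∀ x y, C.Adj x y → x ≠ N p → y ≠ N p → x ≠ p → y ≠ p →
        ¬C.Adj (N p) x → ¬C.Adj (N p) y → False := by
      intro p hp x y hxy hxN hyN hxp hyp h1 h2
      exact hno p (N p) x y (hNadj p hp) hxy hxp.symm hyp.symm hxN.symm hyN.symm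
        (hNnadj p hp x hxN) (hNnadj p hp y hyN) h1 h2
    set fib : W → Finset W := fun x => P.filter (fun p => N p = x) with hfib
    have hfibmem : ∀ x p, p ∈ fib x ↔ p ∈ P ∧ N p = x := by intro x p; simp [hfib]
    clear_value fib
    have hsplit : ∀ x, C.degree x = (C.neighborFinset x ∩ Qs).card + (fib x).card := by
      intro x
      have h1 : C.neighborFinset x \ Qs = fib x := by
        ext u
        simp only [Finset.mem_sdiff, hfibmem, hNmem]
        constructor
        · rintro ⟨hadj, hu⟩
          have huP : u ∈ P := hPof u hu
          exact ⟨huP, (hNuniq u huP x hadj.symm).symm⟩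
        · rintro ⟨huP, hNu⟩
          exact ⟨(hNu ▸ hNadj u huP : C.Adj u x).symm, hPnotQ u huP⟩
      rw [← hNcard x, ← Finset.card_inter_add_card_sdiff (C.neighborFinset x) Qs, h1]
    have hQsub : ∀ x, C.neighborFinset x ∩ Qs ⊆ Qs.erase x := by
      intro x u hu
      obtain ⟨h1, h2⟩ := Finset.mem_inter.mp hu
      exact Finset.mem_erase.mpr ⟨((hNmem x u).mp h1).ne', h2⟩
    have hE3 : ∀ x ∈ Qs, (C.neighborFinset x ∩ Qs).card ≤ 3 := by
      intro x hx
      refine (Finset.card_le_card (hQsub x)).trans ?_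
      rw [Finset.card_erase_of_mem hx, hQcard]
    have hdisj_fib : ∀ x y : W, x ≠ y → Disjoint (fib x) (fib y) := by
      intro x y hxy
      rw [Finset.disjoint_left]
      intro p hpx hpy
      exact hxy (((hfibmem x p).mp hpx).2 ▸ ((hfibmem y p).mp hpy).2)
    have hfibsum : (fib α).card + (fib β).card + (fib γ).card + (fib δ).card = k + m := by
      have hunion : P = fib α ∪ fib β ∪ fib γ ∪ fib δ := by
        ext p
        simp only [Finset.mem_union, hfibmem]
        constructor
        · intro hp
          rcases (hQmem (N p)).mp (stepA p hp) with h | h | h | h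
          · exact Or.inl (Or.inl (Or.inl ⟨hp, h⟩))
          · exact Or.inl (Or.inl (Or.inr ⟨hp, h⟩))
          · exact Or.inl (Or.inr ⟨hp, h⟩)
          · exact Or.inr ⟨hp, h⟩
        · rintro (((⟨hp, _⟩ | ⟨hp, _⟩) | ⟨hp, _⟩) | ⟨hp, _⟩) <;> exact hp
      have d1 : Disjoint (fib α ∪ fib β ∪ fib γ) (fib δ) :=
        Finset.disjoint_union_left.mpr ⟨Finset.disjoint_union_left.mpr
          ⟨hdisj_fib α δ hαδ, hdisj_fib β δ hβδ⟩, hdisj_fib γ δ hγδ⟩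
      have d2 : Disjoint (fib α ∪ fib β) (fib γ) :=
        Finset.disjoint_union_left.mpr ⟨hdisj_fib α γ hαγ, hdisj_fib β γ hβγ⟩
      have d3 : Disjoint (fib α) (fib β) := hdisj_fib α β hαβ
      rw [hunion, Finset.card_union_of_disjoint d1, Finset.card_union_of_disjoint d2,
        Finset.card_union_of_disjoint d3] at hPcard
      omega
    have eqα : (C.neighborFinset α ∩ Qs).card + (fib α).card = 2 := by
      rw [← hsplit α]; exact dα
    have eqβ : (C.neighborFinset β ∩ Qs).card + (fib β).card = m + 2 := by
      rw [← hsplit β]; exact dβ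
    have eqγ : (C.neighborFinset γ ∩ Qs).card + (fib γ).card = k + 2 := by
      rw [← hsplit γ]; exact dγ
    have eqδ : (C.neighborFinset δ ∩ Qs).card + (fib δ).card = 2 := by
      rw [← hsplit δ]; exact dδ
    have master := master_arith (fib α).card (fib β).card (fib γ).card (fib δ).card
      (C.neighborFinset α ∩ Qs).card (C.neighborFinset β ∩ Qs).card
      (C.neighborFinset γ ∩ Qs).card (C.neighborFinset δ ∩ Qs).card k m
      eqα eqβ eqγ eqδ hfibsum (hE3 α hαQ) (hE3 β hβQ) (hE3 γ hγQ) (hE3 δ hδQ)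
    -- generic helpers
    have hSmem : ∀ x u : W, u ∈ C.neighborFinset x ∩ Qs ↔ C.Adj x u ∧ u ∈ Qs := by
      intro x u; rw [Finset.mem_inter, hNmem]
    have hadj_of_memS : ∀ x u : W, u ∈ C.neighborFinset x ∩ Qs → C.Adj x u :=
      fun x u hu => ((hSmem x u).mp hu).1
    have hmemS : ∀ x u : W, C.Adj x u → u ∈ Qs → u ∈ C.neighborFinset x ∩ Qs :=
      fun x u h1 h2 => (hSmem x u).mpr ⟨h1, h2⟩
    have pair_eq : ∀ (S : Finset W) (u v : W), S.card = 2 → u ≠ v → u ∈ S → v ∈ S →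
        S = {u, v} := by
      intro S u v h2 huv hu hv
      refine (Finset.eq_of_subset_of_card_le ?_ ?_).symm
      · intro w hw
        rcases Finset.mem_insert.mp hw with rfl | hw'
        · exact hu
        · rw [Finset.mem_singleton.mp hw']; exact hv
      · rw [h2, Finset.card_insert_of_notMem (by simp [huv]), Finset.card_singleton]
    have hfib_mem_adj : ∀ x : W, ∀ v ∈ fib x, ∀ u, C.Adj v u ↔ u = x := by
      intro x v hv u
      obtain ⟨hvP, hNv⟩ := (hfibmem x v).mp hv
      constructor
      · intro h; rw [← hNv]; exact hNuniq v hvP u h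
      · rintro rfl; exact hNv ▸ hNadj v hvP
    have hpart_gen : ∀ a' b' c' d' : W,
        (∀ u, u ∈ Qs ↔ (u = a' ∨ u = b' ∨ u = c' ∨ u = d')) →
        fib a' = ∅ → fib d' = ∅ →
        Finset.univ \ {a', b', c', d'} = fib c' ∪ fib b' := by
      intro a' b' c' d' hQ ha hd
      ext v
      simp only [Finset.mem_sdiff, Finset.mem_univ, true_and, Finset.mem_insert,
        Finset.mem_singleton, Finset.mem_union, not_or]
      constructor
      · rintro ⟨h1, h2, h3, h4⟩
        have hvP : v ∈ P := hPof v (fun hv => by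
          rcases (hQ v).mp hv with h | h | h | h
          · exact h1 h
          · exact h2 h
          · exact h3 h
          · exact h4 h)
        rcases (hQ (N v)).mp (stepA v hvP) with h | h | h | h
        · exact absurd (ha ▸ (hfibmem a' v).mpr ⟨hvP, h⟩) (Finset.notMem_empty v)
        · exact Or.inr ((hfibmem b' v).mpr ⟨hvP, h⟩)
        · exact Or.inl ((hfibmem c' v).mpr ⟨hvP, h⟩)
        · exact absurd (hd ▸ (hfibmem d' v).mpr ⟨hvP, h⟩) (Finset.notMem_empty v)
      · intro h
        have hvP : v ∈ P := by
          rcases h with h | h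
          · exact ((hfibmem c' v).mp h).1
          · exact ((hfibmem b' v).mp h).1
        have hvQ := hPnotQ v hvP
        refine ⟨?_, ?_, ?_, ?_⟩ <;> intro e <;> apply hvQ
        · exact (hQ v).mpr (Or.inl e)
        · exact (hQ v).mpr (Or.inr (Or.inl e))
        · exact (hQ v).mpr (Or.inr (Or.inr (Or.inl e)))
        · exact (hQ v).mpr (Or.inr (Or.inr (Or.inr e)))
    rcases master with ⟨pa0, pd0, eb2, ec2⟩ | ⟨pa0, pd0, eb3, ec1⟩ | ⟨pa0, pd0, eb1, ec3⟩ |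
      ⟨pad1, eb3, ec2⟩ | ⟨pad1, eb2, ec3⟩ | ⟨eb3, ec3, pad2⟩
    · -- Case I : the target configuration
      have eA2 : (C.neighborFinset α ∩ Qs).card = 2 := by
        rw [pa0, Nat.add_zero] at eqα; exact eqα
      have eD2 : (C.neighborFinset δ ∩ Qs).card = 2 := by
        rw [pd0, Nat.add_zero] at eqδ; exact eqδ
      have pb_m : (fib β).card = m := by
        rw [eb2] at eqβ
        exact Nat.add_left_cancel (eqβ.trans (Nat.add_comm m 2))
      have pc_k : (fib γ).card = k := by
        rw [ec2] at eqγ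
        exact Nat.add_left_cancel (eqγ.trans (Nat.add_comm k 2))
      -- the finishing argument, with generic labels
      have finish1 : ∀ a' b' c' d' : W,
          (∀ u, u ∈ Qs ↔ (u = a' ∨ u = b' ∨ u = c' ∨ u = d')) →
          a' ≠ b' → a' ≠ c' → a' ≠ d' → b' ≠ c' → b' ≠ d' → c' ≠ d' →
          fib a' = ∅ → fib d' = ∅ →
          (fib c').card = k → (fib b').card = m →
          (C.neighborFinset a' ∩ Qs).card = 2 → (C.neighborFinset d' ∩ Qs).card = 2 →
          (C.neighborFinset c' ∩ Qs).card = 2 →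
          C.Adj b' c' → C.neighborFinset b' ∩ Qs = {c', d'} → CSpec C k m := by
        intro a' b' c' d' hQall nab nac nad nbc nbd ncd fa0 fd0 fck fbm ea2 ed2 ec2' hBC hSb
        have ha'Q : a' ∈ Qs := (hQall a').mpr (Or.inl rfl)
        have hb'Q : b' ∈ Qs := (hQall b').mpr (Or.inr (Or.inl rfl))
        have hc'Q : c' ∈ Qs := (hQall c').mpr (Or.inr (Or.inr (Or.inl rfl)))
        have hd'Q : d' ∈ Qs := (hQall d').mpr (Or.inr (Or.inr (Or.inr rfl)))
        have hd'Sb : d' ∈ C.neighborFinset b' ∩ Qs :=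
          hSb ▸ Finset.mem_insert_of_mem (Finset.mem_singleton_self d')
        have hBD : C.Adj b' d' := hadj_of_memS b' d' hd'Sb
        have hnotSb : ∀ u, C.Adj b' u → u ∈ Qs → u = c' ∨ u = d' := by
          intro u h1 h2
          have := hmemS b' u h1 h2
          rw [hSb] at this
          rcases Finset.mem_insert.mp this with h | h
          · exact Or.inl h
          · exact Or.inr (Finset.mem_singleton.mp h)
        have hcb'mem : b' ∈ C.neighborFinset c' ∩ Qs := hmemS c' b' hBC.symm hb'Q
        obtain ⟨s, hsb, hSc⟩ := two_mem ec2' hcb'mem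
        have hsmem : s ∈ C.neighborFinset c' ∩ Qs :=
          hSc ▸ Finset.mem_insert_of_mem (Finset.mem_singleton_self s)
        have hCs : C.Adj c' s := hadj_of_memS c' s hsmem
        have hsQ : s ∈ Qs := ((hSmem c' s).mp hsmem).2
        have hs_a : s = a' := by
          rcases (hQall s).mp hsQ with h | h | h | h
          · exact h
          · exact absurd h hsb
          · exact absurd h hCs.ne'
          · -- s = d' : contradiction
            exfalso
            rw [h] at hSc hCs
            have hSd : C.neighborFinset d' ∩ Qs = {b', c'} :=
              pair_eq _ b' c' ed2 nbc (hmemS d' b' hBD.symm hb'Q) (hmemS d' c' hCs.symm hc'Q)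
            obtain ⟨u, hu⟩ := Finset.card_pos.mp (by rw [ea2]; exact Nat.zero_lt_two)
            have hau : C.Adj a' u := hadj_of_memS a' u hu
            have huQ : u ∈ Qs := ((hSmem a' u).mp hu).2
            rcases (hQall u).mp huQ with h' | h' | h' | h'
            · exact hau.ne h'.symm
            · rcases hnotSb a' (h' ▸ hau).symm ha'Q with h'' | h''
              · exact nac h''
              · exact nad h''
            · have : a' ∈ C.neighborFinset c' ∩ Qs := hmemS c' a' (h' ▸ hau).symm ha'Q
              rw [hSc] at this
              rcases Finset.mem_insert.mp this with h'' | h''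
              · exact nab h''
              · exact nad (Finset.mem_singleton.mp h'')
            · have : a' ∈ C.neighborFinset d' ∩ Qs := hmemS d' a' (h' ▸ hau).symm ha'Q
              rw [hSd] at this
              rcases Finset.mem_insert.mp this with h'' | h''
              · exact nab h''
              · exact nac (Finset.mem_singleton.mp h'')
        rw [hs_a] at hSc hCs
        -- now hSc : N(c') ∩ Qs = {b', a'},  hCs : C.Adj c' a'
        have hSa : C.neighborFinset a' ∩ Qs = {c', d'} := by
          have hc'mem : c' ∈ C.neighborFinset a' ∩ Qs := hmemS a' c' hCs.symm hc'Q
          obtain ⟨t, htc, hSa'⟩ := two_mem ea2 hc'mem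
          have htmem : t ∈ C.neighborFinset a' ∩ Qs :=
            hSa' ▸ Finset.mem_insert_of_mem (Finset.mem_singleton_self t)
          have hat : C.Adj a' t := hadj_of_memS a' t htmem
          have htQ : t ∈ Qs := ((hSmem a' t).mp htmem).2
          have htd : t = d' := by
            rcases (hQall t).mp htQ with h | h | h | h
            · exact absurd h hat.ne'
            · exfalso
              rcases hnotSb a' (h ▸ hat).symm ha'Q with h'' | h''
              · exact nac h''
              · exact nad h''
            · exact absurd h htc
            · exact h
          rw [htd] at hSa'
          exact hSa'
        have hAD : C.Adj a' d' :=
          hadj_of_memS a' d' (hSa ▸ Finset.mem_insert_of_mem (Finset.mem_singleton_self d'))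
        have nadj_ab : ¬C.Adj a' b' := by
          intro h
          rcases hnotSb a' h.symm ha'Q with h'' | h''
          · exact nac h''
          · exact nad h''
        have nadj_cd : ¬C.Adj c' d' := by
          intro h
          have : d' ∈ C.neighborFinset c' ∩ Qs := hmemS c' d' h hd'Q
          rw [hSc] at this
          rcases Finset.mem_insert.mp this with h'' | h''
          · exact nbd h''.symm
          · exact nad (Finset.mem_singleton.mp h'').symm
        exact ⟨a', b', c', d', fib c', fib b', nab, nac, nad, nbc, nbd, ncd,
          hpart_gen a' b' c' d' hQall fa0 fd0, hdisj_fib c' b' nbc.symm,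
          fck, fbm, nadj_ab, nadj_cd, hCs.symm, hAD, hBC, hBD,
          fun v hv u => hfib_mem_adj c' v hv u, fun w hw u => hfib_mem_adj b' w hw u⟩
      rcases Nat.eq_zero_or_pos m with hm0 | hm1
      · -- m = 0 (so k ≥ 1) : all pendants at γ
        have hk1 : 0 < k := Nat.pos_of_ne_zero (fun h => hkm (by rw [h, hm0]))
        obtain ⟨x, y, hxy, hSγ⟩ := Finset.card_eq_two.mp ec2
        have hxmem : x ∈ C.neighborFinset γ ∩ Qs := hSγ ▸ Finset.mem_insert_self x {y}
        have hymem : y ∈ C.neighborFinset γ ∩ Qs :=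
          hSγ ▸ Finset.mem_insert_of_mem (Finset.mem_singleton_self y)
        have hγx : C.Adj γ x := hadj_of_memS γ x hxmem
        have hγy : C.Adj γ y := hadj_of_memS γ y hymem
        have hxQ : x ∈ Qs := ((hSmem γ x).mp hxmem).2
        have hyQ : y ∈ Qs := ((hSmem γ y).mp hymem).2
        have hxγ : x ≠ γ := hγx.ne'
        have hyγ : y ≠ γ := hγy.ne'
        have hsub3 : ({γ, x, y} : Finset W) ⊆ Qs := by
          intro u hu
          rcases Finset.mem_insert.mp hu with rfl | hu'
          · exact hγQ
          · rcases Finset.mem_insert.mp hu' with rfl | hu''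
            · exact hxQ
            · rw [Finset.mem_singleton.mp hu'']; exact hyQ
        have hc3 : ({γ, x, y} : Finset W).card = 3 := by
          rw [Finset.card_insert_of_notMem (by simp [Ne.symm hxγ, Ne.symm hyγ]),
            Finset.card_insert_of_notMem (by simp [hxy]), Finset.card_singleton]
        have hc1 : (Qs \ {γ, x, y}).card = 1 := by
          rw [Finset.card_sdiff_of_subset hsub3, hQcard, hc3]
        obtain ⟨z, hzs⟩ := Finset.card_eq_one.mp hc1
        have hzmem : z ∈ Qs \ {γ, x, y} := hzs ▸ Finset.mem_singleton_self z
        have hzQ : z ∈ Qs := (Finset.mem_sdiff.mp hzmem).1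
        have hz3 : z ≠ γ ∧ z ≠ x ∧ z ≠ y := by
          have h := (Finset.mem_sdiff.mp hzmem).2
          simp only [Finset.mem_insert, Finset.mem_singleton, not_or] at h
          exact h
        have hQall : ∀ u, u ∈ Qs ↔ (u = x ∨ u = y ∨ u = γ ∨ u = z) := by
          intro u
          constructor
          · intro hu
            by_cases h1 : u = γ
            · exact Or.inr (Or.inr (Or.inl h1))
            by_cases h2 : u = x
            · exact Or.inl h2
            by_cases h3 : u = y
            · exact Or.inr (Or.inl h3)
            have hu2 : u ∈ Qs \ {γ, x, y} := Finset.mem_sdiff.mpr ⟨hu, by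
              simp only [Finset.mem_insert, Finset.mem_singleton, not_or]
              exact ⟨h1, h2, h3⟩⟩
            rw [hzs] at hu2
            exact Or.inr (Or.inr (Or.inr (Finset.mem_singleton.mp hu2)))
          · rintro (rfl | rfl | rfl | rfl)
            · exact hxQ
            · exact hyQ
            · exact hγQ
            · exact hzQ
        have fib0 : ∀ u, u ∈ Qs → u ≠ γ → fib u = ∅ := by
          intro u hu hne
          rcases (hQmem u).mp hu with rfl | rfl | h | rfl
          · exact Finset.card_eq_zero.mp pa0
          · exact Finset.card_eq_zero.mp (pb_m.trans hm0)
          · exact absurd h hne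
          · exact Finset.card_eq_zero.mp pd0
        have e2 : ∀ u, u ∈ Qs → u ≠ γ → (C.neighborFinset u ∩ Qs).card = 2 := by
          intro u hu hne
          rcases (hQmem u).mp hu with rfl | rfl | h | rfl
          · exact eA2
          · exact eb2
          · exact absurd h hne
          · exact eD2
        have hznγ : ¬C.Adj γ z := by
          intro h
          have hmem := hmemS γ z h hzQ
          rw [hSγ] at hmem
          rcases Finset.mem_insert.mp hmem with h' | h'
          · exact hz3.2.1 h'
          · exact hz3.2.2 (Finset.mem_singleton.mp h')
        have hSz : C.neighborFinset z ∩ Qs = {x, y} := by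
          apply Finset.eq_of_subset_of_card_le
          · intro u hu
            have hadj := hadj_of_memS z u hu
            have huQ := ((hSmem z u).mp hu).2
            rcases (hQall u).mp huQ with h | h | h | h
            · rw [h]; exact Finset.mem_insert_self x {y}
            · rw [h]; exact Finset.mem_insert_of_mem (Finset.mem_singleton_self y)
            · exact absurd (h ▸ hadj).symm hznγ
            · exact absurd (h ▸ hadj) (C.loopless.irrefl z)
          · rw [e2 z hzQ hz3.1, Finset.card_insert_of_notMem (by simp [hxy]),
              Finset.card_singleton]
        have hzy : C.Adj z y :=
          hadj_of_memS z y (hSz ▸ Finset.mem_insert_of_mem (Finset.mem_singleton_self y))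
        have hSy : C.neighborFinset y ∩ Qs = {γ, z} := pair_eq _ γ z (e2 y hyQ hyγ)
          (Ne.symm hz3.1) (hmemS y γ hγy.symm hγQ) (hmemS y z hzy.symm hzQ)
        exact finish1 x y γ z hQall hxy hxγ (Ne.symm hz3.2.1) hyγ (Ne.symm hz3.2.2)
          (Ne.symm hz3.1) (fib0 x hxQ hxγ) (fib0 z hzQ hz3.1) pc_k
          (by rw [fib0 y hyQ hyγ, Finset.card_empty]; exact hm0.symm)
          (e2 x hxQ hxγ) (e2 z hzQ hz3.1) ec2 hγy.symm hSy
      rcases Nat.eq_zero_or_pos k with hk0 | hk1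
      · -- k = 0 (so m ≥ 1) : all pendants at β
        obtain ⟨x, y, hxy, hSβ2⟩ := Finset.card_eq_two.mp eb2
        have hxmem : x ∈ C.neighborFinset β ∩ Qs := hSβ2 ▸ Finset.mem_insert_self x {y}
        have hymem : y ∈ C.neighborFinset β ∩ Qs :=
          hSβ2 ▸ Finset.mem_insert_of_mem (Finset.mem_singleton_self y)
        have hβx : C.Adj β x := hadj_of_memS β x hxmem
        have hβy : C.Adj β y := hadj_of_memS β y hymem
        have hxQ : x ∈ Qs := ((hSmem β x).mp hxmem).2
        have hyQ : y ∈ Qs := ((hSmem β y).mp hymem).2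
        have hxβ : x ≠ β := hβx.ne'
        have hyβ : y ≠ β := hβy.ne'
        have hsub3 : ({β, x, y} : Finset W) ⊆ Qs := by
          intro u hu
          rcases Finset.mem_insert.mp hu with rfl | hu'
          · exact hβQ
          · rcases Finset.mem_insert.mp hu' with rfl | hu''
            · exact hxQ
            · rw [Finset.mem_singleton.mp hu'']; exact hyQ
        have hc3 : ({β, x, y} : Finset W).card = 3 := by
          rw [Finset.card_insert_of_notMem (by simp [Ne.symm hxβ, Ne.symm hyβ]),
            Finset.card_insert_of_notMem (by simp [hxy]), Finset.card_singleton]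
        have hc1 : (Qs \ {β, x, y}).card = 1 := by
          rw [Finset.card_sdiff_of_subset hsub3, hQcard, hc3]
        obtain ⟨z, hzs⟩ := Finset.card_eq_one.mp hc1
        have hzmem : z ∈ Qs \ {β, x, y} := hzs ▸ Finset.mem_singleton_self z
        have hzQ : z ∈ Qs := (Finset.mem_sdiff.mp hzmem).1
        have hz3 : z ≠ β ∧ z ≠ x ∧ z ≠ y := by
          have h := (Finset.mem_sdiff.mp hzmem).2
          simp only [Finset.mem_insert, Finset.mem_singleton, not_or] at h
          exact h
        have hQall : ∀ u, u ∈ Qs ↔ (u = z ∨ u = β ∨ u = x ∨ u = y) := by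
          intro u
          constructor
          · intro hu
            by_cases h1 : u = β
            · exact Or.inr (Or.inl h1)
            by_cases h2 : u = x
            · exact Or.inr (Or.inr (Or.inl h2))
            by_cases h3 : u = y
            · exact Or.inr (Or.inr (Or.inr h3))
            have hu2 : u ∈ Qs \ {β, x, y} := Finset.mem_sdiff.mpr ⟨hu, by
              simp only [Finset.mem_insert, Finset.mem_singleton, not_or]
              exact ⟨h1, h2, h3⟩⟩
            rw [hzs] at hu2
            exact Or.inl (Finset.mem_singleton.mp hu2)
          · rintro (rfl | rfl | rfl | rfl)
            · exact hzQ
            · exact hβQ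
            · exact hxQ
            · exact hyQ
        have fib0 : ∀ u, u ∈ Qs → u ≠ β → fib u = ∅ := by
          intro u hu hne
          rcases (hQmem u).mp hu with rfl | h | rfl | rfl
          · exact Finset.card_eq_zero.mp pa0
          · exact absurd h hne
          · exact Finset.card_eq_zero.mp (pc_k.trans hk0)
          · exact Finset.card_eq_zero.mp pd0
        have e2 : ∀ u, u ∈ Qs → u ≠ β → (C.neighborFinset u ∩ Qs).card = 2 := by
          intro u hu hne
          rcases (hQmem u).mp hu with rfl | h | rfl | rfl
          · exact eA2
          · exact absurd h hne
          · exact ec2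
          · exact eD2
        have hznβ : ¬C.Adj β z := by
          intro h
          have hmem := hmemS β z h hzQ
          rw [hSβ2] at hmem
          rcases Finset.mem_insert.mp hmem with h' | h'
          · exact hz3.2.1 h'
          · exact hz3.2.2 (Finset.mem_singleton.mp h')
        have hSz : C.neighborFinset z ∩ Qs = {x, y} := by
          apply Finset.eq_of_subset_of_card_le
          · intro u hu
            have hadj := hadj_of_memS z u hu
            have huQ := ((hSmem z u).mp hu).2
            rcases (hQall u).mp huQ with h | h | h | h
            · exact absurd (h ▸ hadj) (C.loopless.irrefl z)
            · exact absurd (h ▸ hadj).symm hznβ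
            · rw [h]; exact Finset.mem_insert_self x {y}
            · rw [h]; exact Finset.mem_insert_of_mem (Finset.mem_singleton_self y)
          · rw [e2 z hzQ hz3.1, Finset.card_insert_of_notMem (by simp [hxy]),
              Finset.card_singleton]
        exact finish1 z β x y hQall hz3.1 hz3.2.1 hz3.2.2 (Ne.symm hxβ) (Ne.symm hyβ) hxy
          (fib0 z hzQ hz3.1) (fib0 y hyQ hyβ)
          (by rw [fib0 x hxQ hxβ, Finset.card_empty]; exact hk0.symm) pb_m
          (e2 z hzQ hz3.1) (e2 y hyQ hyβ) (e2 x hxQ hxβ) hβx hSβ2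
      -- k ≥ 1 and m ≥ 1
      obtain ⟨pg, hpg⟩ := Finset.card_pos.mp (show 0 < (fib γ).card by rw [pc_k]; exact hk1)
      obtain ⟨pbb, hpbb⟩ := Finset.card_pos.mp (show 0 < (fib β).card by rw [pb_m]; exact hm1)
      obtain ⟨hpgP, hpgN⟩ := (hfibmem γ pg).mp hpg
      obtain ⟨hpbP, hpbN⟩ := (hfibmem β pbb).mp hpbb
      have hβγadj : C.Adj β γ := by
        have h := stepB pbb hpbP pg hpgP (by rw [hpbN, hpgN]; exact hβγ)
        rw [hpbN, hpgN] at h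
        exact h
      obtain ⟨t, htγ, hSβ⟩ := two_mem eb2 (hmemS β γ hβγadj hγQ)
      have htmem : t ∈ C.neighborFinset β ∩ Qs :=
        hSβ ▸ Finset.mem_insert_of_mem (Finset.mem_singleton_self t)
      have hβt : C.Adj β t := hadj_of_memS β t htmem
      have htQ : t ∈ Qs := ((hSmem β t).mp htmem).2
      rcases (hQmem t).mp htQ with h | h | h | h
      · -- t = α : use labels (δ, β, γ, α)
        rw [h] at hSβ
        refine finish1 δ β γ α ?_ hβδ.symm hγδ.symm hαδ.symm hβγ hαβ.symm hαγ.symm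
          (Finset.card_eq_zero.mp pd0) (Finset.card_eq_zero.mp pa0) pc_k pb_m eD2 eA2 ec2
          hβγadj hSβ
        intro u
        rw [hQmem u]
        constructor
        · rintro (h | h | h | h)
          · exact Or.inr (Or.inr (Or.inr h))
          · exact Or.inr (Or.inl h)
          · exact Or.inr (Or.inr (Or.inl h))
          · exact Or.inl h
        · rintro (h | h | h | h)
          · exact Or.inr (Or.inr (Or.inr h))
          · exact Or.inr (Or.inl h)
          · exact Or.inr (Or.inr (Or.inl h))
          · exact Or.inl h
      · exact absurd h hβt.ne'
      · exact absurd h htγ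
      · -- t = δ : use labels (α, β, γ, δ)
        rw [h] at hSβ
        exact finish1 α β γ δ hQmem hαβ hαγ hαδ hβγ hβδ hγδ (Finset.card_eq_zero.mp pa0)
          (Finset.card_eq_zero.mp pd0) pc_k pb_m eA2 eD2 ec2 hβγadj hSβ
    · -- Case II : eb = 3, ec = 1 : contradiction
      have eA2 : (C.neighborFinset α ∩ Qs).card = 2 := by
        rw [pa0, Nat.add_zero] at eqα; exact eqα
      have hSβfull : C.neighborFinset β ∩ Qs = Qs.erase β := by
        apply Finset.eq_of_subset_of_card_le (hQsub β)
        rw [Finset.card_erase_of_mem hβQ, hQcard, eb3]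
      have hadjβ : ∀ u, u ∈ Qs → β ≠ u → C.Adj β u := by
        intro u hu hne
        refine hadj_of_memS β u ?_
        rw [hSβfull]
        exact Finset.mem_erase.mpr ⟨Ne.symm hne, hu⟩
      obtain ⟨y, hy⟩ := Finset.card_eq_one.mp ec1
      have hβSγ : β ∈ C.neighborFinset γ ∩ Qs :=
        hmemS γ β (hadjβ γ hγQ hβγ).symm hβQ
      have hSγ : C.neighborFinset γ ∩ Qs = {β} := by
        rw [hy] at hβSγ ⊢
        rw [← Finset.mem_singleton.mp hβSγ]
      have hγnadj : ∀ u, u ∈ Qs → u ≠ β → ¬C.Adj γ u := by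
        intro u hu hne hadj
        have hmem := hmemS γ u hadj hu
        rw [hSγ] at hmem
        exact hne (Finset.mem_singleton.mp hmem)
      have hαβadj : C.Adj β α := hadjβ α hαQ (Ne.symm hαβ)
      obtain ⟨t, htβ, hSα⟩ := two_mem eA2 (hmemS α β hαβadj.symm hβQ)
      have htmem : t ∈ C.neighborFinset α ∩ Qs :=
        hSα ▸ Finset.mem_insert_of_mem (Finset.mem_singleton_self t)
      have hαt : C.Adj α t := hadj_of_memS α t htmem
      have htQ : t ∈ Qs := ((hSmem α t).mp htmem).2
      have htδ : t = δ := by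
        rcases (hQmem t).mp htQ with h | h | h | h
        · exact absurd h hαt.ne'
        · exact absurd h htβ
        · exact absurd ((h ▸ hαt).symm) (hγnadj α hαQ hαβ)
        · exact h
      have hαδadj : C.Adj α δ := htδ ▸ hαt
      have pc1 : (fib γ).card = k + 1 := by
        rw [ec1] at eqγ
        exact Nat.add_left_cancel (eqγ.trans (Nat.add_comm 1 (k + 1)).symm)
      obtain ⟨pg, hpg⟩ := Finset.card_pos.mp (by rw [pc1]; exact Nat.succ_pos k)
      obtain ⟨hpgP, hpgN⟩ := (hfibmem γ pg).mp hpg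
      exact (stepB' pg hpgP α δ hαδadj (by rw [hpgN]; exact hαγ)
        (by rw [hpgN]; exact Ne.symm hγδ)
        (Ne.symm (hPQdisj pg hpgP α hαQ)) (Ne.symm (hPQdisj pg hpgP δ hδQ))
        (by rw [hpgN]; exact hγnadj α hαQ hαβ)
        (by rw [hpgN]; exact hγnadj δ hδQ (Ne.symm hβδ))).elim
    · -- Case III : eb = 1, ec = 3 : contradiction
      have eA2 : (C.neighborFinset α ∩ Qs).card = 2 := by
        rw [pa0, Nat.add_zero] at eqα; exact eqα
      have hSγfull : C.neighborFinset γ ∩ Qs = Qs.erase γ := by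
        apply Finset.eq_of_subset_of_card_le (hQsub γ)
        rw [Finset.card_erase_of_mem hγQ, hQcard, ec3]
      have hadjγ : ∀ u, u ∈ Qs → γ ≠ u → C.Adj γ u := by
        intro u hu hne
        refine hadj_of_memS γ u ?_
        rw [hSγfull]
        exact Finset.mem_erase.mpr ⟨Ne.symm hne, hu⟩
      obtain ⟨y, hy⟩ := Finset.card_eq_one.mp eb1
      have hγSβ : γ ∈ C.neighborFinset β ∩ Qs :=
        hmemS β γ (hadjγ β hβQ (Ne.symm hβγ)).symm hγQ
      have hSβ : C.neighborFinset β ∩ Qs = {γ} := by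
        rw [hy] at hγSβ ⊢
        rw [← Finset.mem_singleton.mp hγSβ]
      have hβnadj : ∀ u, u ∈ Qs → u ≠ γ → ¬C.Adj β u := by
        intro u hu hne hadj
        have hmem := hmemS β u hadj hu
        rw [hSβ] at hmem
        exact hne (Finset.mem_singleton.mp hmem)
      have hαγadj : C.Adj γ α := hadjγ α hαQ (Ne.symm hαγ)
      obtain ⟨t, htγ, hSα⟩ := two_mem eA2 (hmemS α γ hαγadj.symm hγQ)
      have htmem : t ∈ C.neighborFinset α ∩ Qs :=
        hSα ▸ Finset.mem_insert_of_mem (Finset.mem_singleton_self t)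
      have hαt : C.Adj α t := hadj_of_memS α t htmem
      have htQ : t ∈ Qs := ((hSmem α t).mp htmem).2
      have htδ : t = δ := by
        rcases (hQmem t).mp htQ with h | h | h | h
        · exact absurd h hαt.ne'
        · exact absurd ((h ▸ hαt).symm) (hβnadj α hαQ hαγ)
        · exact absurd h htγ
        · exact h
      have hαδadj : C.Adj α δ := htδ ▸ hαt
      have pb1 : (fib β).card = m + 1 := by
        rw [eb1] at eqβ
        exact Nat.add_left_cancel (eqβ.trans (Nat.add_comm 1 (m + 1)).symm)
      obtain ⟨pb', hpb'⟩ := Finset.card_pos.mp (by rw [pb1]; exact Nat.succ_pos m)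
      obtain ⟨hpbP, hpbN⟩ := (hfibmem β pb').mp hpb'
      exact (stepB' pb' hpbP α δ hαδadj (by rw [hpbN]; exact hαβ)
        (by rw [hpbN]; exact Ne.symm hβδ)
        (Ne.symm (hPQdisj pb' hpbP α hαQ)) (Ne.symm (hPQdisj pb' hpbP δ hδQ))
        (by rw [hpbN]; exact hβnadj α hαQ hαγ)
        (by rw [hpbN]; exact hβnadj δ hδQ (Ne.symm hγδ))).elim
    · -- Case IV : one pendant at α or δ, eb = 3, ec = 2 : contradiction
      have hSβfull : C.neighborFinset β ∩ Qs = Qs.erase β := by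
        apply Finset.eq_of_subset_of_card_le (hQsub β)
        rw [Finset.card_erase_of_mem hβQ, hQcard, eb3]
      have hadjβ : ∀ u, u ∈ Qs → β ≠ u → C.Adj β u := by
        intro u hu hne
        refine hadj_of_memS β u ?_
        rw [hSβfull]
        exact Finset.mem_erase.mpr ⟨Ne.symm hne, hu⟩
      have caseIV : ∀ x y : W, x ∈ Qs → y ∈ Qs → x ≠ y → x ≠ β → x ≠ γ → y ≠ β → y ≠ γ →
          (∀ u, u ∈ Qs ↔ (u = x ∨ u = y ∨ u = β ∨ u = γ)) →
          (fib x).card = 1 → (fib y).card = 0 →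
          (C.neighborFinset x ∩ Qs).card + (fib x).card = 2 →
          (C.neighborFinset y ∩ Qs).card + (fib y).card = 2 → False := by
        intro x y hxQ hyQ hxy hxβ hxγ hyβ hyγ hQxy fx1 fy0 eqx eqy
        have ex1 : (C.neighborFinset x ∩ Qs).card = 1 := by
          rw [fx1] at eqx
          exact Nat.add_right_cancel eqx
        have ey2 : (C.neighborFinset y ∩ Qs).card = 2 := by
          rw [fy0, Nat.add_zero] at eqy; exact eqy
        obtain ⟨px, hpx⟩ := Finset.card_pos.mp (by rw [fx1]; exact Nat.one_pos)
        obtain ⟨hpxP, hpxN⟩ := (hfibmem x px).mp hpx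
        have hβx : C.Adj β x := hadjβ x hxQ (Ne.symm hxβ)
        rcases Nat.eq_zero_or_pos k with hk0 | hk1
        · -- k = 0
          have hSx : C.neighborFinset x ∩ Qs = {β} := by
            obtain ⟨u, hu⟩ := Finset.card_eq_one.mp ex1
            have hβmem : β ∈ C.neighborFinset x ∩ Qs := hmemS x β hβx.symm hβQ
            rw [hu] at hβmem ⊢
            rw [← Finset.mem_singleton.mp hβmem]
          have hxnadj : ∀ u, u ∈ Qs → u ≠ β → ¬C.Adj x u := by
            intro u hu hne hadj
            have hmem := hmemS x u hadj hu
            rw [hSx] at hmem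
            exact hne (Finset.mem_singleton.mp hmem)
          have hβy : C.Adj β y := hadjβ y hyQ (Ne.symm hyβ)
          obtain ⟨t, htβ, hSy⟩ := two_mem ey2 (hmemS y β hβy.symm hβQ)
          have htmem : t ∈ C.neighborFinset y ∩ Qs :=
            hSy ▸ Finset.mem_insert_of_mem (Finset.mem_singleton_self t)
          have hyt : C.Adj y t := hadj_of_memS y t htmem
          have htQ : t ∈ Qs := ((hSmem y t).mp htmem).2
          have htγ : t = γ := by
            rcases (hQxy t).mp htQ with h | h | h | h
            · exact absurd ((h ▸ hyt).symm) (hxnadj y hyQ hyβ)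
            · exact absurd h hyt.ne'
            · exact absurd h htβ
            · exact h
          have hyγadj : C.Adj γ y := (htγ ▸ hyt).symm
          exact stepB' px hpxP γ y hyγadj.symm.symm (by rw [hpxN]; exact Ne.symm hxγ)
            (by rw [hpxN]; exact Ne.symm hxy)
            (Ne.symm (hPQdisj px hpxP γ hγQ)) (Ne.symm (hPQdisj px hpxP y hyQ))
            (by rw [hpxN]; exact hxnadj γ hγQ (Ne.symm hβγ))
            (by rw [hpxN]; exact hxnadj y hyQ hyβ)
        · -- k ≥ 1
          have pc_k : (fib γ).card = k := by
            rw [ec2] at eqγ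
            exact Nat.add_left_cancel (eqγ.trans (Nat.add_comm k 2))
          obtain ⟨pg, hpg⟩ := Finset.card_pos.mp (by rw [pc_k]; exact hk1)
          obtain ⟨hpgP, hpgN⟩ := (hfibmem γ pg).mp hpg
          have hγx : C.Adj γ x := by
            have h := stepB pg hpgP px hpxP (by rw [hpgN, hpxN]; exact Ne.symm hxγ)
            rw [hpgN, hpxN] at h
            exact h
          have hsub : ({β, γ} : Finset W) ⊆ C.neighborFinset x ∩ Qs := by
            intro u hu
            rcases Finset.mem_insert.mp hu with h | hu'
            · rw [h]; exact hmemS x β hβx.symm hβQ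
            · rw [Finset.mem_singleton.mp hu']
              exact hmemS x γ hγx.symm hγQ
          have hcard2 : ({β, γ} : Finset W).card = 2 := by
            rw [Finset.card_insert_of_notMem (by simp [hβγ]), Finset.card_singleton]
          have hle := Finset.card_le_card hsub
          rw [ex1, hcard2] at hle
          exact absurd hle (Nat.not_succ_le_self 1)
      rcases Nat.le_one_iff_eq_zero_or_eq_one.mp (Nat.le.intro pad1) with ha0 | ha1
      · have hd1 : (fib δ).card = 1 := by
          rw [ha0, Nat.zero_add] at pad1; exact pad1
        refine (caseIV δ α hδQ hαQ (Ne.symm hαδ) (Ne.symm hβδ) (Ne.symm hγδ)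
          hαβ hαγ ?_ hd1 ha0 eqδ eqα).elim
        intro u
        rw [hQmem u]
        constructor
        · rintro (h | h | h | h)
          · exact Or.inr (Or.inl h)
          · exact Or.inr (Or.inr (Or.inl h))
          · exact Or.inr (Or.inr (Or.inr h))
          · exact Or.inl h
        · rintro (h | h | h | h)
          · exact Or.inr (Or.inr (Or.inr h))
          · exact Or.inl h
          · exact Or.inr (Or.inl h)
          · exact Or.inr (Or.inr (Or.inl h))
      · have hd0 : (fib δ).card = 0 := by
          rw [ha1] at pad1
          exact Nat.add_left_cancel (pad1.trans (Nat.add_zero 1).symm)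
        refine (caseIV α δ hαQ hδQ hαδ hαβ hαγ (Ne.symm hβδ) (Ne.symm hγδ)
          ?_ ha1 hd0 eqα eqδ).elim
        intro u
        rw [hQmem u]
        constructor
        · rintro (h | h | h | h)
          · exact Or.inl h
          · exact Or.inr (Or.inr (Or.inl h))
          · exact Or.inr (Or.inr (Or.inr h))
          · exact Or.inr (Or.inl h)
        · rintro (h | h | h | h)
          · exact Or.inl h
          · exact Or.inr (Or.inr (Or.inr h))
          · exact Or.inr (Or.inl h)
          · exact Or.inr (Or.inr (Or.inl h))
    · -- Case V : one pendant at α or δ, eb = 2, ec = 3 : contradiction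
      have hSγfull : C.neighborFinset γ ∩ Qs = Qs.erase γ := by
        apply Finset.eq_of_subset_of_card_le (hQsub γ)
        rw [Finset.card_erase_of_mem hγQ, hQcard, ec3]
      have hadjγ : ∀ u, u ∈ Qs → γ ≠ u → C.Adj γ u := by
        intro u hu hne
        refine hadj_of_memS γ u ?_
        rw [hSγfull]
        exact Finset.mem_erase.mpr ⟨Ne.symm hne, hu⟩
      have caseV : ∀ x y : W, x ∈ Qs → y ∈ Qs → x ≠ y → x ≠ β → x ≠ γ → y ≠ β → y ≠ γ →
          (∀ u, u ∈ Qs ↔ (u = x ∨ u = y ∨ u = β ∨ u = γ)) →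
          (fib x).card = 1 → (fib y).card = 0 →
          (C.neighborFinset x ∩ Qs).card + (fib x).card = 2 →
          (C.neighborFinset y ∩ Qs).card + (fib y).card = 2 → False := by
        intro x y hxQ hyQ hxy hxβ hxγ hyβ hyγ hQxy fx1 fy0 eqx eqy
        have ex1 : (C.neighborFinset x ∩ Qs).card = 1 := by
          rw [fx1] at eqx
          exact Nat.add_right_cancel eqx
        have ey2 : (C.neighborFinset y ∩ Qs).card = 2 := by
          rw [fy0, Nat.add_zero] at eqy; exact eqy
        obtain ⟨px, hpx⟩ := Finset.card_pos.mp (by rw [fx1]; exact Nat.one_pos)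
        obtain ⟨hpxP, hpxN⟩ := (hfibmem x px).mp hpx
        have hγx : C.Adj γ x := hadjγ x hxQ (Ne.symm hxγ)
        rcases Nat.eq_zero_or_pos m with hm0 | hm1
        · -- m = 0
          have hSx : C.neighborFinset x ∩ Qs = {γ} := by
            obtain ⟨u, hu⟩ := Finset.card_eq_one.mp ex1
            have hγmem : γ ∈ C.neighborFinset x ∩ Qs := hmemS x γ hγx.symm hγQ
            rw [hu] at hγmem ⊢
            rw [← Finset.mem_singleton.mp hγmem]
          have hxnadj : ∀ u, u ∈ Qs → u ≠ γ → ¬C.Adj x u := by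
            intro u hu hne hadj
            have hmem := hmemS x u hadj hu
            rw [hSx] at hmem
            exact hne (Finset.mem_singleton.mp hmem)
          have hγy : C.Adj γ y := hadjγ y hyQ (Ne.symm hyγ)
          obtain ⟨t, htγ, hSy⟩ := two_mem ey2 (hmemS y γ hγy.symm hγQ)
          have htmem : t ∈ C.neighborFinset y ∩ Qs :=
            hSy ▸ Finset.mem_insert_of_mem (Finset.mem_singleton_self t)
          have hyt : C.Adj y t := hadj_of_memS y t htmem
          have htQ : t ∈ Qs := ((hSmem y t).mp htmem).2
          have htβ : t = β := by
            rcases (hQxy t).mp htQ with h | h | h | h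
            · exact absurd ((h ▸ hyt).symm) (hxnadj y hyQ hyγ)
            · exact absurd h hyt.ne'
            · exact h
            · exact absurd h htγ
          have hyβadj : C.Adj β y := (htβ ▸ hyt).symm
          exact stepB' px hpxP β y hyβadj (by rw [hpxN]; exact Ne.symm hxβ)
            (by rw [hpxN]; exact Ne.symm hxy)
            (Ne.symm (hPQdisj px hpxP β hβQ)) (Ne.symm (hPQdisj px hpxP y hyQ))
            (by rw [hpxN]; exact hxnadj β hβQ hβγ)
            (by rw [hpxN]; exact hxnadj y hyQ hyγ)
        · -- m ≥ 1
          have pb_m : (fib β).card = m := by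
            rw [eb2] at eqβ
            exact Nat.add_left_cancel (eqβ.trans (Nat.add_comm m 2))
          obtain ⟨pb', hpb'⟩ := Finset.card_pos.mp (by rw [pb_m]; exact hm1)
          obtain ⟨hpbP, hpbN⟩ := (hfibmem β pb').mp hpb'
          have hβx : C.Adj β x := by
            have h := stepB pb' hpbP px hpxP (by rw [hpbN, hpxN]; exact Ne.symm hxβ)
            rw [hpbN, hpxN] at h
            exact h
          have hsub : ({β, γ} : Finset W) ⊆ C.neighborFinset x ∩ Qs := by
            intro u hu
            rcases Finset.mem_insert.mp hu with h | hu'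
            · rw [h]; exact hmemS x β hβx.symm hβQ
            · rw [Finset.mem_singleton.mp hu']
              exact hmemS x γ hγx.symm hγQ
          have hcard2 : ({β, γ} : Finset W).card = 2 := by
            rw [Finset.card_insert_of_notMem (by simp [hβγ]), Finset.card_singleton]
          have hle := Finset.card_le_card hsub
          rw [ex1, hcard2] at hle
          exact absurd hle (Nat.not_succ_le_self 1)
      rcases Nat.le_one_iff_eq_zero_or_eq_one.mp (Nat.le.intro pad1) with ha0 | ha1
      · have hd1 : (fib δ).card = 1 := by
          rw [ha0, Nat.zero_add] at pad1; exact pad1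
        refine (caseV δ α hδQ hαQ (Ne.symm hαδ) (Ne.symm hβδ) (Ne.symm hγδ)
          hαβ hαγ ?_ hd1 ha0 eqδ eqα).elim
        intro u
        rw [hQmem u]
        constructor
        · rintro (h | h | h | h)
          · exact Or.inr (Or.inl h)
          · exact Or.inr (Or.inr (Or.inl h))
          · exact Or.inr (Or.inr (Or.inr h))
          · exact Or.inl h
        · rintro (h | h | h | h)
          · exact Or.inr (Or.inr (Or.inr h))
          · exact Or.inl h
          · exact Or.inr (Or.inl h)
          · exact Or.inr (Or.inr (Or.inl h))
      · have hd0 : (fib δ).card = 0 := by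
          rw [ha1] at pad1
          exact Nat.add_left_cancel (pad1.trans (Nat.add_zero 1).symm)
        refine (caseV α δ hαQ hδQ hαδ hαβ hαγ (Ne.symm hβδ) (Ne.symm hγδ)
          ?_ ha1 hd0 eqα eqδ).elim
        intro u
        rw [hQmem u]
        constructor
        · rintro (h | h | h | h)
          · exact Or.inl h
          · exact Or.inr (Or.inr (Or.inl h))
          · exact Or.inr (Or.inr (Or.inr h))
          · exact Or.inr (Or.inl h)
        · rintro (h | h | h | h)
          · exact Or.inl h
          · exact Or.inr (Or.inr (Or.inr h))
          · exact Or.inr (Or.inl h)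
          · exact Or.inr (Or.inr (Or.inl h))
    · -- Case VI : eb = 3, ec = 3, two pendants at α, δ : contradiction
      have hSβfull : C.neighborFinset β ∩ Qs = Qs.erase β := by
        apply Finset.eq_of_subset_of_card_le (hQsub β)
        rw [Finset.card_erase_of_mem hβQ, hQcard, eb3]
      have hSγfull : C.neighborFinset γ ∩ Qs = Qs.erase γ := by
        apply Finset.eq_of_subset_of_card_le (hQsub γ)
        rw [Finset.card_erase_of_mem hγQ, hQcard, ec3]
      have hadjβ : ∀ u, u ∈ Qs → β ≠ u → C.Adj β u := by
        intro u hu hne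
        refine hadj_of_memS β u ?_
        rw [hSβfull]
        exact Finset.mem_erase.mpr ⟨Ne.symm hne, hu⟩
      have hadjγ : ∀ u, u ∈ Qs → γ ≠ u → C.Adj γ u := by
        intro u hu hne
        refine hadj_of_memS γ u ?_
        rw [hSγfull]
        exact Finset.mem_erase.mpr ⟨Ne.symm hne, hu⟩
      have hcard2 : ({β, γ} : Finset W).card = 2 := by
        rw [Finset.card_insert_of_notMem (by simp [hβγ]), Finset.card_singleton]
      have hsubα : ({β, γ} : Finset W) ⊆ C.neighborFinset α ∩ Qs := by
        intro u hu
        rcases Finset.mem_insert.mp hu with h | hu'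
        · rw [h]; exact hmemS α β (hadjβ α hαQ (Ne.symm hαβ)).symm hβQ
        · rw [Finset.mem_singleton.mp hu']
          exact hmemS α γ (hadjγ α hαQ (Ne.symm hαγ)).symm hγQ
      have hsubδ : ({β, γ} : Finset W) ⊆ C.neighborFinset δ ∩ Qs := by
        intro u hu
        rcases Finset.mem_insert.mp hu with h | hu'
        · rw [h]; exact hmemS δ β (hadjβ δ hδQ hβδ).symm hβQ
        · rw [Finset.mem_singleton.mp hu']
          exact hmemS δ γ (hadjγ δ hδQ hγδ).symm hγQ
      have h2α := Finset.card_le_card hsubα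
      have h2δ := Finset.card_le_card hsubδ
      rw [hcard2] at h2α h2δ
      have hpa : (fib α).card = 0 := by
        have h := Nat.add_le_add_right h2α (fib α).card
        rw [eqα] at h
        exact Nat.le_zero.mp (Nat.le_of_add_le_add_left h)
      have hpd : (fib δ).card = 0 := by
        have h := Nat.add_le_add_right h2δ (fib δ).card
        rw [eqδ] at h
        exact Nat.le_zero.mp (Nat.le_of_add_le_add_left h)
      rw [hpa, hpd] at pad2
      exact absurd pad2 (by decide)


lemma compl_noTwoK2 {W : Type} {H : SimpleGraph W} (hch : IsChordal H) : NoTwoK2 Hᶜ := by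
  intro p x q y hpx hqy hpq hpy hxq hxy npq npy nxq nxy
  obtain ⟨hpx', hnpx⟩ := (H.compl_adj p x).mp hpx
  obtain ⟨hqy', hnqy⟩ := (H.compl_adj q y).mp hqy
  have Hpq : H.Adj p q := by
    by_contra hh; exact npq ((H.compl_adj p q).mpr ⟨hpq, hh⟩)
  have Hqx : H.Adj q x := by
    by_contra hh; exact nxq ((H.compl_adj x q).mpr ⟨hxq, fun h2 => hh h2.symm⟩)
  have Hxy : H.Adj x y := by
    by_contra hh; exact nxy ((H.compl_adj x y).mpr ⟨hxy, hh⟩)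
  have Hyp : H.Adj y p := by
    by_contra hh; exact npy ((H.compl_adj p y).mpr ⟨hpy, fun h2 => hh h2.symm⟩)
  exact no2K2 hch hpx' hqy' hnpx hnqy Hpq Hqx Hxy Hyp

/-- `G_{k,m}` is a chordal-unigraph: every chordal graph with degree sequence
`((k+m+2)^{k+m}, (k+m+1)^2, k+1, m+1)` is isomorphic to `G_{k,m}`. -/
theorem Gkm_isChordalUnigraph (k m : ℕ)
    {W : Type} [Fintype W] (H : SimpleGraph W) (hchordal : IsChordal H)
    (hdeg : degSeq H = Multiset.replicate (k + m) (k + m + 2)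
      + Multiset.replicate 2 (k + m + 1) + {k + 1, m + 1}) :
    Nonempty (H ≃g Gkm k m) := by
  classical
  rw [degSeq] at hdeg
  obtain ⟨a, b, c, d, hab, hac, had, hbc, hbd, hcd, hda, hdd, hdb, hdc, hrest, hcard⟩ :=
    extract (fun v => Nat.card (H.neighborSet v)) k m hdeg
  have hdeg_eq : ∀ v : W, Nat.card (H.neighborSet v) = H.degree v := fun v => by
    rw [Nat.card_eq_fintype_card, SimpleGraph.card_neighborSet_eq_degree]
  have hCdeg : ∀ v : W, Hᶜ.degree v = k + m + 3 - H.degree v := fun v => by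
    rw [SimpleGraph.degree_compl, hcard]; omega
  have dCa : Hᶜ.degree a = 2 := by
    rw [hCdeg, ← hdeg_eq, hda]; omega
  have dCd : Hᶜ.degree d = 2 := by
    rw [hCdeg, ← hdeg_eq, hdd]; omega
  have dCb : Hᶜ.degree b = m + 2 := by
    rw [hCdeg, ← hdeg_eq, hdb]; omega
  have dCc : Hᶜ.degree c = k + 2 := by
    rw [hCdeg, ← hdeg_eq, hdc]; omega
  have dP : ∀ v, v ≠ a → v ≠ b → v ≠ c → v ≠ d → Hᶜ.degree v = 1 := by
    intro v h1 h2 h3 h4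
    rw [hCdeg, ← hdeg_eq, hrest v h1 h2 h3 h4]; omega
  exact cspec_iso H k m (classify Hᶜ k m (compl_noTwoK2 hchordal) a b c d
    hab hac had hbc hbd hcd dCa dCd dCb dCc dP hcard)
end
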